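/- arXiv:0902.3039 — 14 statements merged into one kernel-verified Lean document; each statement's English description precedes it below -/
import Mathlib

section
/- Let a, b be real numbers and define f_{a,b}(x) = (1+x)^b (1-x)^{-a} · arccos(x) for x ∈ (0,1). Then f_{a,b} is strictly decreasing on (0,1) if and only if b ≤ 2/π − a and a ≤ 1/2. -/
/-!
Put `θ = arccos x`. The derivative of `f_{a,b}` is a positive factor times
`θ (b (1 - x) + a (1 + x)) - sin θ`.

If `b ≤ 2/π - a` and `a ≤ 1/2`, the coefficient `b (1 - x) + a (1 + x)` is at most
`2/π + (1 - 2/π) x`, and `arccos x · (2/π + (1 - 2/π) x) < √(1 - x²)` on `(0, 1)`. Indeed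
`ψ x = √(1 - x²) / (2/π + (1 - 2/π) x) - arccos x` vanishes at `0` and `1`, and `ψ'` has the
sign of the affine function `(2/π)² + 2/π - 1 - (1 - 2/π)² x`, which is positive at `0`
(as `π < 3.15`) and negative at `1` (as `π > 3`); so `ψ` rises and then falls.

Conversely, if `f_{a,b}` decreases then `θ (b (1 - x) + a (1 + x)) ≤ sin θ` on `(0, 1)`. At
`x = 0` this gives `(a + b) π/2 ≤ 1`. Because `sin θ ≤ θ`, it also gives
`b (1 - x) + a (1 + x) ≤ 1`, and at `x = 1` that is `2a ≤ 1`.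
-/

open Real Set

theorem min_lt_of_strictMonoOn_of_strictAntiOn {α β : Type*} [LinearOrder α] [LinearOrder β]
    {g : α → β} {a z b t : α} (hmono : StrictMonoOn g (Icc a z))
    (hanti : StrictAntiOn g (Icc z b)) (ht : t ∈ Ioo a b) : min (g a) (g b) < g t := by
  rcases le_or_gt t z with htz | hzt
  · exact min_lt_of_left_lt (hmono (left_mem_Icc.2 (ht.1.le.trans htz)) ⟨ht.1.le, htz⟩ ht.1)
  · exact min_lt_of_right_lt
      (hanti ⟨hzt.le, ht.2.le⟩ (right_mem_Icc.2 (hzt.trans ht.2).le) ht.2)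

theorem min_lt_of_hasDerivAt_pos_of_neg {g g' : ℝ → ℝ} {a z b t : ℝ} (hz : z ∈ Icc a b)
    (hg : ContinuousOn g (Icc a b)) (hderiv : ∀ y ∈ Ioo a b, HasDerivAt g (g' y) y)
    (hpos : ∀ y ∈ Ioo a z, 0 < g' y) (hneg : ∀ y ∈ Ioo z b, g' y < 0) (ht : t ∈ Ioo a b) :
    min (g a) (g b) < g t := by
  have hmono : StrictMonoOn g (Icc a z) := by
    refine strictMonoOn_of_hasDerivWithinAt_pos (f' := g') (convex_Icc a z)
      (hg.mono (Icc_subset_Icc_right hz.2)) (fun y hy => ?_) (fun y hy => ?_) <;>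
      rw [interior_Icc] at hy
    · exact (hderiv y ⟨hy.1, hy.2.trans_le hz.2⟩).hasDerivWithinAt
    · exact hpos y hy
  have hanti : StrictAntiOn g (Icc z b) := by
    refine strictAntiOn_of_hasDerivWithinAt_neg (f' := g') (convex_Icc z b)
      (hg.mono (Icc_subset_Icc_left hz.1)) (fun y hy => ?_) (fun y hy => ?_) <;>
      rw [interior_Icc] at hy
    · exact (hderiv y ⟨hz.1.trans_lt hy.1, hy.2⟩).hasDerivWithinAt
    · exact hneg y hy
  exact min_lt_of_strictMonoOn_of_strictAntiOn hmono hanti ht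

theorem sqrt_one_sub_sq_le_arccos (x : ℝ) : √(1 - x ^ 2) ≤ arccos x :=
  sin_arccos x ▸ sin_le (arccos_nonneg x)

theorem hasDerivAt_sqrt_one_sub_sq_div_sub_arccos {p x : ℝ} (hx : x ∈ Ioo (-1) 1)
    (hL : p + (1 - p) * x ≠ 0) :
    HasDerivAt (fun x => √(1 - x ^ 2) / (p + (1 - p) * x) - arccos x)
      ((1 - x) * (p ^ 2 + p - 1 - (1 - p) ^ 2 * x) / (√(1 - x ^ 2) * (p + (1 - p) * x) ^ 2))
      x := by
  have hs : 0 < 1 - x ^ 2 := by nlinarith [hx.1, hx.2]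
  have hsqrt := (((hasDerivAt_id' x).fun_pow 2).const_sub 1).sqrt hs.ne'
  have hlin := ((hasDerivAt_id' x).const_mul (1 - p)).const_add p
  refine ((hsqrt.fun_div hlin hL).fun_sub (hasDerivAt_arccos hx.1.ne' hx.2.ne)).congr_deriv ?_
  have hs' := (sqrt_pos.2 hs).ne'
  have hL' : p + x * (1 - p) ≠ 0 := by rwa [mul_comm]
  field_simp
  linear_combination 2 * (p - 1) * sq_sqrt hs.le

theorem two_div_pi_lt_two_div_three : 2 / π < 2 / 3 :=
  div_lt_div_of_pos_left two_pos three_pos pi_gt_three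

theorem one_lt_sq_two_div_pi_add_two_div_pi : 1 < (2 / π) ^ 2 + 2 / π := by
  have : 0.63 < 2 / π := by rw [lt_div_iff₀ pi_pos]; linarith [pi_lt_d2]
  nlinarith

theorem arccos_mul_lt_sqrt_one_sub_sq {x : ℝ} (hx : x ∈ Ioo 0 1) :
    arccos x * (2 / π + (1 - 2 / π) * x) < √(1 - x ^ 2) := by
  have hp_lt := two_div_pi_lt_two_div_three
  have hp_sq := one_lt_sq_two_div_pi_add_two_div_pi
  set p := 2 / π with hp
  have hp0 : 0 < p := by positivity
  have hL : ∀ y ∈ Icc (0 : ℝ) 1, 0 < p + (1 - p) * y := fun y hy => by nlinarith [hy.1]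
  set z := (p ^ 2 + p - 1) / (1 - p) ^ 2
  have hz : z ∈ Ioo 0 1 :=
    ⟨div_pos (by linarith) (by nlinarith), by rw [div_lt_one (by nlinarith)]; nlinarith⟩
  have hz' : (1 - p) ^ 2 * z = p ^ 2 + p - 1 := mul_div_cancel₀ _ (by nlinarith)
  set ψ' := fun y =>
    (1 - y) * (p ^ 2 + p - 1 - (1 - p) ^ 2 * y) / (√(1 - y ^ 2) * (p + (1 - p) * y) ^ 2)
  have hψ'_eq : ∀ y ∈ Ioo (0 : ℝ) 1, ∃ c > 0, ψ' y = c * (z - y) := fun y hy => by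
    have hden : 0 < √(1 - y ^ 2) * (p + (1 - p) * y) ^ 2 :=
      mul_pos (sqrt_pos.2 (by nlinarith [hy.1, hy.2])) (pow_pos (hL y (Ioo_subset_Icc_self hy)) 2)
    refine ⟨(1 - y) * (1 - p) ^ 2 / (√(1 - y ^ 2) * (p + (1 - p) * y) ^ 2),
      div_pos (mul_pos (by linarith [hy.2]) (by nlinarith)) hden, ?_⟩
    simp only [ψ', ← hz']
    ring
  set ψ := fun y => √(1 - y ^ 2) / (p + (1 - p) * y) - arccos y
  have hψ := min_lt_of_hasDerivAt_pos_of_neg (g := ψ) (g' := ψ') (Ioo_subset_Icc_self hz)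
    (((by fun_prop : Continuous fun y : ℝ => √(1 - y ^ 2)).continuousOn.div (by fun_prop)
      fun y hy => (hL y hy).ne').sub continuous_arccos.continuousOn)
    (fun y hy => hasDerivAt_sqrt_one_sub_sq_div_sub_arccos ⟨by linarith [hy.1], hy.2⟩
      (hL y (Ioo_subset_Icc_self hy)).ne')
    (fun y hy => by
      obtain ⟨c, hc, hψ'y⟩ := hψ'_eq y ⟨hy.1, hy.2.trans hz.2⟩
      exact hψ'y ▸ mul_pos hc (sub_pos.2 hy.2))
    (fun y hy => by
      obtain ⟨c, hc, hψ'y⟩ := hψ'_eq y ⟨hz.1.trans hy.1, hy.2⟩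
      exact hψ'y ▸ mul_neg_of_pos_of_neg hc (sub_neg.2 hy.1)) hx
  have hψ0 : ψ 0 = 0 := by simp [ψ, hp]
  have hψ1 : ψ 1 = 0 := by simp [ψ]
  rwa [hψ0, hψ1, min_self, sub_pos, lt_div_iff₀ (hL x (Ioo_subset_Icc_self hx))] at hψ

noncomputable def carlsonFun (a b x : ℝ) : ℝ := (1 + x) ^ b * (1 - x) ^ (-a) * arccos x

section Carlson

variable {a b : ℝ}

theorem hasDerivAt_carlsonFun {x : ℝ} (hx : x ∈ Ioo (-1) 1) :
    HasDerivAt (carlsonFun a b) ((1 + x) ^ (b - 1) * (1 - x) ^ (-a - 1) *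
      (arccos x * (b * (1 - x) + a * (1 + x)) - √(1 - x ^ 2))) x := by
  have hp : 0 < 1 + x := by linarith [hx.1]
  have hm : 0 < 1 - x := by linarith [hx.2]
  have hs : 0 < 1 - x ^ 2 := by nlinarith
  have h := ((((hasDerivAt_id' x).const_add 1).rpow_const (p := b) (Or.inl hp.ne')).mul
    (((hasDerivAt_id' x).const_sub 1).rpow_const (p := -a) (Or.inl hm.ne'))).mul
    (hasDerivAt_arccos hx.1.ne' hx.2.ne)
  refine h.congr_deriv ?_
  rw [Pi.mul_apply, rpow_sub_one hp.ne', rpow_sub_one hm.ne']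
  have hs' := (sqrt_pos.2 hs).ne'
  field_simp
  linear_combination sq_sqrt hs.le

theorem strictAntiOn_carlsonFun
    (h : ∀ x ∈ Ioo (0 : ℝ) 1, arccos x * (b * (1 - x) + a * (1 + x)) < √(1 - x ^ 2)) :
    StrictAntiOn (carlsonFun a b) (Ioo 0 1) := by
  have hderiv : ∀ x ∈ Ioo (0 : ℝ) 1, HasDerivAt (carlsonFun a b) _ x :=
    fun x hx => hasDerivAt_carlsonFun ⟨by linarith [hx.1], hx.2⟩
  refine strictAntiOn_of_deriv_neg (convex_Ioo 0 1)
    (fun x hx => (hderiv x hx).continuousAt.continuousWithinAt) fun x hx => ?_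
  rw [interior_Ioo] at hx
  rw [(hderiv x hx).deriv]
  exact mul_neg_of_pos_of_neg (mul_pos (rpow_pos_of_pos (by linarith [hx.1]) _)
    (rpow_pos_of_pos (by linarith [hx.2]) _)) (sub_neg.2 (h x hx))

theorem arccos_mul_le_sqrt_of_strictAntiOn_carlsonFun
    (h : StrictAntiOn (carlsonFun a b) (Ioo 0 1)) :
    ∀ x ∈ Ioo (0 : ℝ) 1, arccos x * (b * (1 - x) + a * (1 + x)) ≤ √(1 - x ^ 2) := by
  intro x hx
  have hP : 0 < (1 + x) ^ (b - 1) * (1 - x) ^ (-a - 1) :=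
    mul_pos (rpow_pos_of_pos (by linarith [hx.1]) _) (rpow_pos_of_pos (by linarith [hx.2]) _)
  have hD := (hasDerivAt_carlsonFun ⟨by linarith [hx.1], hx.2⟩).hasDerivWithinAt
    |>.nonpos_of_antitoneOn (isOpen_Ioo.preperfect x hx) h.antitoneOn
  exact sub_nonpos.1 (nonpos_of_mul_nonpos_right hD hP)

theorem le_of_forall_arccos_mul_le_sqrt
    (h : ∀ x ∈ Ioo (0 : ℝ) 1, arccos x * (b * (1 - x) + a * (1 + x)) ≤ √(1 - x ^ 2)) :
    b ≤ 2 / π - a ∧ a ≤ 1 / 2 := by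
  have hclosure : closure (Ioo (0 : ℝ) 1) = Icc 0 1 := closure_Ioo zero_ne_one
  have h0 := le_on_closure h (by fun_prop) (by fun_prop) (hclosure ▸ left_mem_Icc.2 zero_le_one)
  have hlin : ∀ x ∈ Ioo (0 : ℝ) 1, b * (1 - x) + a * (1 + x) ≤ 1 := fun x hx =>
    le_of_mul_le_mul_left (by simpa using (h x hx).trans (sqrt_one_sub_sq_le_arccos x))
      (arccos_pos.2 hx.2)
  have h1 :=
    le_on_closure hlin (by fun_prop) (by fun_prop) (hclosure ▸ right_mem_Icc.2 zero_le_one)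
  norm_num at h0 h1
  constructor
  · rw [le_sub_iff_add_le, le_div_iff₀ pi_pos]; linarith
  · linarith

theorem arccos_mul_lt_sqrt_of_le {x : ℝ} (hb : b ≤ 2 / π - a) (ha : a ≤ 1 / 2)
    (hx : x ∈ Ioo 0 1) : arccos x * (b * (1 - x) + a * (1 + x)) < √(1 - x ^ 2) := by
  refine lt_of_le_of_lt (mul_le_mul_of_nonneg_left ?_ (arccos_nonneg x))
    (arccos_mul_lt_sqrt_one_sub_sq hx)
  nlinarith [mul_nonneg (sub_nonneg.2 hb) (sub_nonneg.2 hx.2.le),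
    mul_nonneg (sub_nonneg.2 ha) hx.1.le]

end Carlson

theorem carlson_arccos_strict_anti_iff (a b : ℝ) :
    StrictAntiOn (fun x : ℝ => (1 + x) ^ b * (1 - x) ^ (-a) * Real.arccos x) (Set.Ioo 0 1) ↔
      (b ≤ 2 / Real.pi - a ∧ a ≤ 1 / 2) := by
  change StrictAntiOn (carlsonFun a b) (Ioo 0 1) ↔ _
  exact ⟨fun h =>
      le_of_forall_arccos_mul_le_sqrt (arccos_mul_le_sqrt_of_strictAntiOn_carlsonFun h),
    fun ⟨hb, ha⟩ => strictAntiOn_carlsonFun fun x hx => arccos_mul_lt_sqrt_of_le hb ha hx⟩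
end

section
/- Let a, b be real numbers and define f_{a,b}(x) = (1+x)^b (1-x)^{-a} · arccos(x) for x ∈ (0,1). If (a,b) satisfies at least one of the following three conditions: (i) 2/π − a ≤ b ≤ a − 4/π²; (ii) 1/2 ≤ a ≤ b + 1/3; (iii) 1/3 < a − b < 4/π² and a + b ≥ 2(a−b)^{3/2} / √(4(a−b) − 1); then f_{a,b} is strictly increasing on (0,1). -/
open Real Set

/-!
Writing `θ = arccos x`, `s = a + b`, `t = a - b`, the derivative of `f_{a,b}` is a positive factor
times `(s + t cos θ) θ - sin θ`, so it suffices that `sin θ < (s + t cos θ) θ` on `(0, π/2)`.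
Under (ii) this follows from the Cusa–Huygens inequality `3 sin θ < (2 + cos θ) θ`. Under (i) one
may take `s = 2/π`, `t = 4/π²`; then Cusa–Huygens works for `θ ≤ 1`, and Taylor expansion at `π/2`
beyond. Under (iii) the Taylor bounds of degree five and six make the inequality a quadratic
condition in `θ²`, whose discriminant is controlled by `2 t^{3/2} / √(4t - 1)`.
-/

lemma pos_of_hasDerivAt_pos {F F' : ℝ → ℝ} (hF : ∀ x, HasDerivAt F (F' x) x) (h0 : F 0 = 0)
    (hF' : ∀ x, 0 < x → 0 < F' x) {x : ℝ} (hx : 0 < x) : 0 < F x := by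
  have hmono : StrictMonoOn F (Ici 0) :=
    strictMonoOn_of_hasDerivWithinAt_pos (convex_Ici 0)
      (fun y _ => (hF y).continuousAt.continuousWithinAt)
      (fun y _ => (hF y).hasDerivWithinAt) (fun y hy => hF' y (by simpa using hy))
  simpa [h0] using hmono self_mem_Ici hx.le hx

lemma cos_lt_taylor₄ {x : ℝ} (hx : 0 < x) : cos x < 1 - x ^ 2 / 2 + x ^ 4 / 24 := by
  have := pos_of_hasDerivAt_pos (F := fun y => 1 - y ^ 2 / 2 + y ^ 4 / 24 - cos y)
    (F' := fun y => sin y - (y - y ^ 3 / 6))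
    (fun y => (((((hasDerivAt_pow 2 y).div_const 2).const_sub 1).add
        ((hasDerivAt_pow 4 y).div_const 24)).sub (hasDerivAt_cos y)).congr_deriv (by ring))
    (by simp) (fun y hy => by linarith [sin_gt_sub_cube hy]) hx
  linarith

lemma sin_lt_taylor₅ {x : ℝ} (hx : 0 < x) : sin x < x - x ^ 3 / 6 + x ^ 5 / 120 := by
  have := pos_of_hasDerivAt_pos (F := fun y => y - y ^ 3 / 6 + y ^ 5 / 120 - sin y)
    (F' := fun y => 1 - y ^ 2 / 2 + y ^ 4 / 24 - cos y)
    (fun y => ((((hasDerivAt_id y).sub ((hasDerivAt_pow 3 y).div_const 6)).add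
        ((hasDerivAt_pow 5 y).div_const 120)).sub (hasDerivAt_sin y)).congr_deriv (by ring))
    (by simp) (fun y hy => by linarith [cos_lt_taylor₄ hy]) hx
  linarith

lemma taylor₆_lt_cos {x : ℝ} (hx : 0 < x) : 1 - x ^ 2 / 2 + x ^ 4 / 24 - x ^ 6 / 720 < cos x := by
  have := pos_of_hasDerivAt_pos (F := fun y => cos y - (1 - y ^ 2 / 2 + y ^ 4 / 24 - y ^ 6 / 720))
    (F' := fun y => y - y ^ 3 / 6 + y ^ 5 / 120 - sin y)
    (fun y => ((hasDerivAt_cos y).sub (((((hasDerivAt_pow 2 y).div_const 2).const_sub 1).add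
        ((hasDerivAt_pow 4 y).div_const 24)).sub ((hasDerivAt_pow 6 y).div_const 720))).congr_deriv
          (by ring))
    (by simp) (fun y hy => by linarith [sin_lt_taylor₅ hy]) hx
  linarith

lemma three_mul_sin_lt_two_add_cos_mul {θ : ℝ} (hθ : 0 < θ) : 3 * sin θ < (2 + cos θ) * θ := by
  rcases le_or_gt θ 3 with hθ3 | hθ3
  · have hs := sin_lt_taylor₅ hθ
    have hc := mul_lt_mul_of_pos_right (taylor₆_lt_cos hθ) hθ
    have : 0 ≤ θ ^ 5 * (9 - θ ^ 2) := mul_nonneg (by positivity) (by nlinarith)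
    nlinarith [pow_pos hθ 5]
  · nlinarith [sin_le_one θ, neg_one_le_cos θ]

lemma sin_lt_add_mul_cos_mul_of_le_one_third {s t θ : ℝ} (hst : 1 ≤ s + t) (ht : t ≤ 1 / 3)
    (hθ : 0 < θ) : sin θ < (s + t * cos θ) * θ := by
  have hcusa := three_mul_sin_lt_two_add_cos_mul hθ
  have : t * (θ * (1 - cos θ)) ≤ 1 / 3 * (θ * (1 - cos θ)) :=
    mul_le_mul_of_nonneg_right ht (mul_nonneg hθ.le (sub_nonneg.2 (cos_le_one θ)))
  nlinarith

lemma cos_lt_two_div_pi_add_mul_sin_mul {φ : ℝ} (hφ : 0 < φ) (hφ' : φ ≤ 3 / 5) :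
    cos φ < (2 / π + 4 / π ^ 2 * sin φ) * (π / 2 - φ) := by
  have := pi_gt_d2
  have := pi_lt_d2
  have hcos : π ^ 2 * cos φ < π ^ 2 * (1 - φ ^ 2 / 2 + φ ^ 4 / 24) :=
    mul_lt_mul_of_pos_left (cos_lt_taylor₄ hφ) (by positivity)
  have hsin : 2 * π * (φ - φ ^ 3 / 6) ≤ 2 * π * sin φ :=
    mul_le_mul_of_nonneg_left (sin_gt_sub_cube hφ).le (by positivity)
  have hsin' : 4 * φ * sin φ ≤ 4 * φ * φ := mul_le_mul_of_nonneg_left (sin_le hφ.le) (by positivity)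
  have hpoly : 0 ≤ φ ^ 2 * (π ^ 2 / 2 - 4 - π * φ / 3 - π ^ 2 * φ ^ 2 / 24) := by
    have hπφ : π * φ ≤ 3.15 * (3 / 5) := by nlinarith
    have : (π * φ) ^ 2 ≤ (3.15 * (3 / 5)) ^ 2 := pow_le_pow_left₀ (by positivity) hπφ 2
    exact mul_nonneg (sq_nonneg φ) (by nlinarith)
  have key : π ^ 2 * cos φ < (2 * π + 4 * sin φ) * (π / 2 - φ) := by
    nlinarith
  have hπ : π ≠ 0 := pi_ne_zero
  rw [show (2 / π + 4 / π ^ 2 * sin φ) * (π / 2 - φ) = (2 * π + 4 * sin φ) * (π / 2 - φ) / π ^ 2 by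
    field_simp, lt_div_iff₀ (by positivity)]
  linarith

lemma sin_lt_two_div_pi_add_mul_cos_mul {θ : ℝ} (hθ : θ ∈ Ioo 0 (π / 2)) :
    sin θ < (2 / π + 4 / π ^ 2 * cos θ) * θ := by
  rcases le_or_gt θ 1 with hθ1 | hθ1
  · have hcusa := three_mul_sin_lt_two_add_cos_mul hθ.1
    have hcos : 1 / 2 ≤ cos θ := by
      nlinarith [one_sub_sq_div_two_le_cos (x := θ), mul_le_one₀ hθ1 hθ.1.le hθ1]
    have hπ : 5 * π ^ 2 < 12 * π + 12 := by nlinarith [pi_gt_d2, pi_lt_d2]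
    have hcoef : (2 + cos θ) / 3 ≤ 2 / π + 4 / π ^ 2 * cos θ := by
      rw [show 2 / π + 4 / π ^ 2 * cos θ = (2 * π + 4 * cos θ) / π ^ 2 by field_simp,
        div_le_div_iff₀ (by norm_num) (by positivity)]
      nlinarith [pi_lt_d2]
    calc sin θ < (2 + cos θ) / 3 * θ := by linarith
      _ ≤ _ := mul_le_mul_of_nonneg_right hcoef hθ.1.le
  · simpa [sin_pi_div_two_sub, cos_pi_div_two_sub] using
      cos_lt_two_div_pi_add_mul_sin_mul (φ := π / 2 - θ) (by linarith [hθ.2])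
        (by linarith [pi_lt_d2])

lemma sin_lt_add_mul_cos_mul_of_two_div_pi_le {s t θ : ℝ} (hs : 2 / π ≤ s) (ht : 4 / π ^ 2 ≤ t)
    (hθ : θ ∈ Ioo 0 (π / 2)) : sin θ < (s + t * cos θ) * θ := by
  have hcos : 0 ≤ cos θ := cos_nonneg_of_mem_Icc ⟨by linarith [hθ.1, pi_pos], hθ.2.le⟩
  exact (sin_lt_two_div_pi_add_mul_cos_mul hθ).trans_le <| mul_le_mul_of_nonneg_right
    (add_le_add hs (mul_le_mul_of_nonneg_right ht hcos)) hθ.1.le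

-- For `u = θ² < π² / 4 < 2.4675`, bounding `u³` by `2.4675 u²` turns the Taylor bounds into the
-- quadratic `(s - 1 + t) - (3t - 1) u / 6 + γ u²` with `γ = t (1/24 - 2.4675/720) - 1/120`;
-- `hs` says that its discriminant is nonpositive.
lemma sin_lt_add_mul_cos_mul_of_sq_le {s t θ : ℝ} (ht : 0 ≤ t)
    (hγ : 0 < 3671 / 96000 * t - 1 / 120)
    (hs : (3 * t - 1) ^ 2 ≤ 144 * (3671 / 96000 * t - 1 / 120) * (s - 1 + t))
    (hθ : θ ∈ Ioo 0 (π / 2)) : sin θ < (s + t * cos θ) * θ := by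
  set γ := 3671 / 96000 * t - 1 / 120 with hγ_def
  obtain ⟨hθ0, hθπ⟩ := hθ
  set u := θ ^ 2 with hu
  have hu0 : 0 ≤ u := sq_nonneg θ
  have hu_le : u ≤ 2.4675 := by nlinarith [pi_lt_d4]
  have hcubic : t * (u ^ 3 / 720) ≤ t * (329 / 96000 * u ^ 2) :=
    mul_le_mul_of_nonneg_left (by nlinarith [sq_nonneg u]) ht
  have hquad : 0 ≤ (s - 1 + t) - (3 * t - 1) / 6 * u + γ * u ^ 2 := by
    have : 0 ≤ 144 * γ * ((s - 1 + t) - (3 * t - 1) / 6 * u + γ * u ^ 2) := by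
      nlinarith [sq_nonneg (3 * t - 1 - 12 * γ * u)]
    exact (mul_nonneg_iff_of_pos_left (by positivity)).1 this
  have hpoly : 1 - u / 6 + u ^ 2 / 120 ≤ s + t * (1 - u / 2 + u ^ 2 / 24 - u ^ 3 / 720) := by
    rw [hγ_def] at hquad
    linarith
  have hcos : t * (1 - u / 2 + u ^ 2 / 24 - u ^ 3 / 720) ≤ t * cos θ := by
    refine mul_le_mul_of_nonneg_left ?_ ht
    have := taylor₆_lt_cos hθ0
    rw [hu]; linarith
  have hsin : sin θ < (1 - u / 6 + u ^ 2 / 120) * θ := by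
    have := sin_lt_taylor₅ hθ0
    rw [hu]; linarith
  calc sin θ < (1 - u / 6 + u ^ 2 / 120) * θ := hsin
    _ ≤ (s + t * cos θ) * θ := mul_le_mul_of_nonneg_right (by linarith) hθ0.le

lemma three_mul_sub_one_sq_le {t : ℝ} (ht : 1 / 3 < t) :
    (3 * t - 1) ^ 2 ≤
      144 * (3671 / 96000 * t - 1 / 120) * (2 * t ^ ((3 : ℝ) / 2) / √(4 * t - 1) - 1 + t) := by
  obtain ⟨g, hg⟩ : ∃ g, g = 144 * (3671 / 96000 * t - 1 / 120) := ⟨_, rfl⟩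
  rw [← hg]
  have h4t : 0 < 4 * t - 1 := by linarith
  have ht0 : 0 < t := by linarith
  have hg0 : 0 < g := by linarith
  have ht32 : t ^ ((3 : ℝ) / 2) = t * √t := by
    rw [show (3 : ℝ) / 2 = 1 + 1 / 2 by norm_num, rpow_add ht0, rpow_one, sqrt_eq_rpow]
  have hQ : 0 < 1 / 25 - 1013 / 5000 * t - 5373831 / 4000000 * t ^ 2 + 2013 / 250 * t ^ 3 := by
    have := sub_pos.2 ht
    nlinarith [mul_pos this this, mul_pos (mul_pos this this) this]
  have hsq : (((3 * t - 1) ^ 2 + g * (1 - t)) * √(4 * t - 1)) ^ 2 ≤ (2 * g * (t * √t)) ^ 2 := by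
    have hid : (2 * g * (t * √t)) ^ 2 - (((3 * t - 1) ^ 2 + g * (1 - t)) * √(4 * t - 1)) ^ 2
        = (3 * t - 1) ^ 2 *
          (1 / 25 - 1013 / 5000 * t - 5373831 / 4000000 * t ^ 2 + 2013 / 250 * t ^ 3) := by
      simp only [mul_pow, sq_sqrt h4t.le, sq_sqrt ht0.le, hg]
      ring
    nlinarith [mul_nonneg (sq_nonneg (3 * t - 1)) hQ.le]
  have key := (abs_le_of_sq_le_sq hsq (by positivity)).trans' (le_abs_self _)
  have : (3 * t - 1) ^ 2 + g * (1 - t) ≤ g * (2 * (t * √t) / √(4 * t - 1)) := by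
    rw [← mul_div_assoc, le_div_iff₀ (sqrt_pos.2 h4t)]
    linarith
  rw [ht32]
  linarith

lemma sin_lt_add_mul_cos_mul_of_rpow_div_sqrt_le {s t θ : ℝ} (ht : 1 / 3 < t)
    (hs : 2 * t ^ ((3 : ℝ) / 2) / √(4 * t - 1) ≤ s) (hθ : θ ∈ Ioo 0 (π / 2)) :
    sin θ < (s + t * cos θ) * θ :=
  sin_lt_add_mul_cos_mul_of_sq_le (by linarith) (by linarith)
    ((three_mul_sub_one_sq_le ht).trans (mul_le_mul_of_nonneg_left (by linarith) (by linarith))) hθ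

lemma hasDerivAt_rpow_mul_rpow_mul_arccos (a b : ℝ) {x : ℝ} (hx : x ∈ Ioo (-1) 1) :
    HasDerivAt (fun x : ℝ => (1 + x) ^ b * (1 - x) ^ (-a) * arccos x)
      ((1 + x) ^ (b - 1) * (1 - x) ^ (-a - 1) *
        ((a + b + (a - b) * x) * arccos x - √(1 - x ^ 2))) x := by
  obtain ⟨hx₁, hx₂⟩ := hx
  have hp : 0 < 1 + x := by linarith
  have hm : 0 < 1 - x := by linarith
  refine ((((hasDerivAt_id x).const_add 1).rpow_const (p := b) (.inl hp.ne')).mul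
    (((hasDerivAt_id x).const_sub 1).rpow_const (p := -a) (.inl hm.ne'))).mul
    (hasDerivAt_arccos hx₁.ne' hx₂.ne) |>.congr_deriv ?_
  have hs : 0 < √(1 - x ^ 2) := sqrt_pos.2 (by nlinarith)
  have hs2 : √(1 - x ^ 2) ^ 2 = 1 - x ^ 2 := sq_sqrt (by nlinarith)
  simp only [id_eq, Pi.mul_apply]
  rw [show (1 + x) ^ b = (1 + x) ^ (b - 1) * (1 + x) by rw [← rpow_add_one hp.ne']; ring_nf,
    show (1 - x) ^ (-a) = (1 - x) ^ (-a - 1) * (1 - x) by rw [← rpow_add_one hm.ne']; ring_nf]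
  field_simp
  linear_combination hs2

lemma strictMonoOn_rpow_mul_rpow_mul_arccos {a b : ℝ}
    (h : ∀ θ ∈ Ioo 0 (π / 2), sin θ < (a + b + (a - b) * cos θ) * θ) :
    StrictMonoOn (fun x : ℝ => (1 + x) ^ b * (1 - x) ^ (-a) * arccos x) (Ioo 0 1) := by
  have hderiv (x : ℝ) (hx : x ∈ Ioo 0 1) := hasDerivAt_rpow_mul_rpow_mul_arccos a b
    (Ioo_subset_Ioo_left (by norm_num) hx)
  refine strictMonoOn_of_hasDerivWithinAt_pos (convex_Ioo 0 1)
    (fun x hx => (hderiv x hx).continuousAt.continuousWithinAt)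
    (fun x hx => (hderiv x (interior_subset hx)).hasDerivWithinAt) fun x hx => ?_
  rw [interior_Ioo] at hx
  have hθ := h (arccos x) ⟨arccos_pos.2 hx.2, arccos_lt_pi_div_two.2 hx.1⟩
  rw [cos_arccos (by linarith [hx.1]) hx.2.le, sin_arccos] at hθ
  have := rpow_pos_of_pos (show 0 < 1 + x by linarith [hx.1]) (b - 1)
  have := rpow_pos_of_pos (sub_pos.2 hx.2) (-a - 1)
  have : 0 < (a + b + (a - b) * x) * arccos x - √(1 - x ^ 2) := by linarith
  positivity

theorem carlson_arccos_strict_mono_sufficient (a b : ℝ)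
    (h : (2 / Real.pi - a ≤ b ∧ b ≤ a - 4 / Real.pi ^ 2) ∨
         (1 / 2 ≤ a ∧ a ≤ b + 1 / 3) ∨
         (1 / 3 < a - b ∧ a - b < 4 / Real.pi ^ 2 ∧
           a + b ≥ 2 * (a - b) ^ ((3 : ℝ) / 2) / Real.sqrt (4 * (a - b) - 1))) :
    StrictMonoOn (fun x : ℝ => (1 + x) ^ b * (1 - x) ^ (-a) * Real.arccos x) (Set.Ioo 0 1) := by
  refine strictMonoOn_rpow_mul_rpow_mul_arccos fun θ hθ => ?_
  rcases h with ⟨h₁, h₂⟩ | ⟨h₁, h₂⟩ | ⟨h₁, -, h₃⟩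
  · exact sin_lt_add_mul_cos_mul_of_two_div_pi_le (by linarith) (by linarith) hθ
  · exact sin_lt_add_mul_cos_mul_of_le_one_third (by linarith) (by linarith) hθ.1
  · exact sin_lt_add_mul_cos_mul_of_rpow_div_sqrt_le h₁ h₃ hθ
end

section
/- Let a, b be real numbers with 1/3 < a − b < 4/π² and 2/π − b < a ≤ 1/2, and define f_{a,b}(x) = (1+x)^b (1-x)^{-a} · arccos(x) for x ∈ (0,1). Then f_{a,b} has a unique maximum on (0,1); more precisely, there exists a unique point x₀ ∈ (0,1) such that f_{a,b} is strictly increasing on (0, x₀] and strictly decreasing on [x₀, 1). -/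
/-!
With `S = a + b`, `D = a - b` and `V t = t (S + D cos t) - sin t`, the derivative of the function
is `(1 + x)^(b-1) (1 - x)^(-a-1) V (arccos x)`, so it suffices that `V` changes sign exactly once
on `(0, π/2)`, from negative to positive. Its fourth derivative `(4D - 1) sin t + D t cos t` is
positive there, so `V'''` increases from `1 - 3D < 0` to `D π / 2 > 0`. A function that is `≤ 0`
at the left end and `> 0` at the right end of an interval, and whose derivative changes sign once
from negative to positive, does the same; this passes the sign pattern down to `V''`, `V'` and
`V`, whose values `0, 2a - 1, 0` at `0` and `1 - 2D, S - D π / 2, S π / 2 - 1` at `π / 2` have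
the right signs exactly under the hypotheses.
-/

open Real Set

def NegThenPos (g : ℝ → ℝ) (l r : ℝ) : Prop :=
  ∃ c ∈ Ioo l r, (∀ t ∈ Ioo l c, g t < 0) ∧ ∀ t ∈ Ioo c r, 0 < g t

lemma negThenPos_of_strictMonoOn {g : ℝ → ℝ} {l r : ℝ} (hlr : l ≤ r)
    (hmono : StrictMonoOn g (Icc l r)) (hcont : ContinuousOn g (Icc l r))
    (hl : g l < 0) (hr : 0 < g r) : NegThenPos g l r := by
  obtain ⟨c, hc, hgc⟩ := intermediate_value_Ioo hlr hcont ⟨hl, hr⟩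
  refine ⟨c, hc, fun t ht => ?_, fun t ht => ?_⟩
  · rw [← hgc]
    exact hmono ⟨ht.1.le, ht.2.trans hc.2 |>.le⟩ (Ioo_subset_Icc_self hc) ht.2
  · rw [← hgc]
    exact hmono (Ioo_subset_Icc_self hc) ⟨hc.1.trans ht.1 |>.le, ht.2.le⟩ ht.1

lemma NegThenPos.of_hasDerivAt {g g' : ℝ → ℝ} {l r : ℝ} (hg' : NegThenPos g' l r)
    (hcont : ContinuousOn g (Icc l r)) (hderiv : ∀ t ∈ Ioo l r, HasDerivAt g (g' t) t)
    (hl : g l ≤ 0) (hr : 0 < g r) : NegThenPos g l r := by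
  obtain ⟨c, hc, hneg, hpos⟩ := hg'
  have hanti : StrictAntiOn g (Icc l c) := by
    refine strictAntiOn_of_hasDerivWithinAt_neg (f' := g') (convex_Icc l c)
      (hcont.mono (Icc_subset_Icc_right hc.2.le)) (fun t ht => ?_) (fun t ht => ?_)
    all_goals rw [interior_Icc] at ht
    · exact (hderiv t ⟨ht.1, ht.2.trans hc.2⟩).hasDerivWithinAt
    · exact hneg t ht
  have hmono : StrictMonoOn g (Icc c r) := by
    refine strictMonoOn_of_hasDerivWithinAt_pos (f' := g') (convex_Icc c r)
      (hcont.mono (Icc_subset_Icc_left hc.1.le)) (fun t ht => ?_) (fun t ht => ?_)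
    all_goals rw [interior_Icc] at ht
    · exact (hderiv t ⟨hc.1.trans ht.1, ht.2⟩).hasDerivWithinAt
    · exact hpos t ht
  have hgc : g c < 0 := (hanti (left_mem_Icc.2 hc.1.le) (right_mem_Icc.2 hc.1.le) hc.1).trans_le hl
  obtain ⟨t₀, ht₀, hneg₀, hpos₀⟩ := negThenPos_of_strictMonoOn hc.2.le hmono
    (hcont.mono (Icc_subset_Icc_left hc.1.le)) hgc hr
  refine ⟨t₀, ⟨hc.1.trans ht₀.1, ht₀.2⟩, fun t ht => ?_, hpos₀⟩
  rcases lt_or_ge c t with hct | htc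
  · exact hneg₀ t ⟨hct, ht.2⟩
  · exact (hanti (left_mem_Icc.2 hc.1.le) ⟨ht.1.le, htc⟩ ht.1).trans_le hl

lemma NegThenPos.comp_arccos {g : ℝ → ℝ} (h : NegThenPos g 0 (π / 2)) :
    ∃ x₀ ∈ Ioo (0 : ℝ) 1,
      (∀ x ∈ Ioo 0 x₀, 0 < g (arccos x)) ∧ ∀ x ∈ Ioo x₀ 1, g (arccos x) < 0 := by
  obtain ⟨t₀, ht₀, hneg, hpos⟩ := h
  have harccos : arccos (cos t₀) = t₀ := arccos_cos ht₀.1.le (by linarith [ht₀.2, pi_pos])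
  have hx₀ : cos t₀ ∈ Ioo (0 : ℝ) 1 :=
    ⟨cos_pos_of_mem_Ioo ⟨by linarith [ht₀.1, pi_pos], ht₀.2⟩,
      arccos_pos.1 (harccos.symm ▸ ht₀.1)⟩
  refine ⟨cos t₀, hx₀, fun x hx => hpos _ ⟨?_, arccos_lt_pi_div_two.2 hx.1⟩,
    fun x hx => hneg _ ⟨arccos_pos.2 hx.2, ?_⟩⟩
  · exact harccos ▸ arccos_lt_arccos (by linarith [hx.1]) hx.2 hx₀.2.le
  · exact harccos ▸ arccos_lt_arccos (by linarith [hx₀.1]) hx.1 hx.2.le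

lemma strictMonoOn_Ioc_and_strictAntiOn_Ico_of_hasDerivAt {f f' : ℝ → ℝ} {l r c : ℝ}
    (hc : c ∈ Ioo l r) (hf : ∀ x ∈ Ioo l r, HasDerivAt f (f' x) x)
    (hpos : ∀ x ∈ Ioo l c, 0 < f' x) (hneg : ∀ x ∈ Ioo c r, f' x < 0) :
    StrictMonoOn f (Ioc l c) ∧ StrictAntiOn f (Ico c r) := by
  have hcont : ContinuousOn f (Ioo l r) := HasDerivAt.continuousOn hf
  constructor
  · refine strictMonoOn_of_hasDerivWithinAt_pos (f' := f') (convex_Ioc l c)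
      (hcont.mono (Ioc_subset_Ioo_right hc.2)) (fun x hx => ?_) (fun x hx => ?_)
    all_goals rw [interior_Ioc] at hx
    · exact (hf x ⟨hx.1, hx.2.trans hc.2⟩).hasDerivWithinAt
    · exact hpos x hx
  · refine strictAntiOn_of_hasDerivWithinAt_neg (f' := f') (convex_Ico c r)
      (hcont.mono (Ico_subset_Ioo_left hc.1)) (fun x hx => ?_) (fun x hx => ?_)
    all_goals rw [interior_Ico] at hx
    · exact (hf x ⟨hc.1.trans hx.1, hx.2⟩).hasDerivWithinAt
    · exact hneg x hx

lemma eq_of_strictMonoOn_Ioc_of_strictAntiOn_Ico {α β : Type*} [LinearOrder α] [Preorder β]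
    {f : α → β} {l r x y : α} (hx : x ∈ Ioo l r) (hy : y ∈ Ioo l r)
    (hmx : StrictMonoOn f (Ioc l x)) (hax : StrictAntiOn f (Ico x r))
    (hmy : StrictMonoOn f (Ioc l y)) (hay : StrictAntiOn f (Ico y r)) : x = y := by
  rcases lt_trichotomy x y with hxy | hxy | hxy
  · exact absurd (hmy ⟨hx.1, hxy.le⟩ ⟨hy.1, le_rfl⟩ hxy)
      (hax ⟨le_rfl, hx.2⟩ ⟨hxy.le, hy.2⟩ hxy).asymm
  · exact hxy
  · exact absurd (hmx ⟨hy.1, hxy.le⟩ ⟨hx.1, le_rfl⟩ hxy)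
      (hay ⟨le_rfl, hy.2⟩ ⟨hxy.le, hx.2⟩ hxy).asymm

noncomputable def carlsonV (S D t : ℝ) : ℝ := t * (S + D * cos t) - sin t

section
variable (S D t : ℝ)

lemma hasDerivAt_carlsonV :
    HasDerivAt (carlsonV S D) (S + D * cos t - D * t * sin t - cos t) t := by
  have := ((hasDerivAt_id t).mul (((hasDerivAt_cos t).const_mul D).const_add S)).sub
    (hasDerivAt_sin t)
  exact this.congr_deriv (by simp only [id]; ring)

lemma hasDerivAt_carlsonV_deriv :
    HasDerivAt (fun t => S + D * cos t - D * t * sin t - cos t)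
      ((1 - 2 * D) * sin t - D * t * cos t) t := by
  have := ((((hasDerivAt_cos t).const_mul D).const_add S).sub
    (((hasDerivAt_id t).const_mul D).mul (hasDerivAt_sin t))).sub (hasDerivAt_cos t)
  exact this.congr_deriv (by simp only [id]; ring)

lemma hasDerivAt_carlsonV_deriv2 :
    HasDerivAt (fun t => (1 - 2 * D) * sin t - D * t * cos t)
      ((1 - 3 * D) * cos t + D * t * sin t) t := by
  have := ((hasDerivAt_sin t).const_mul (1 - 2 * D)).sub
    (((hasDerivAt_id t).const_mul D).mul (hasDerivAt_cos t))
  exact this.congr_deriv (by simp only [id]; ring)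

lemma hasDerivAt_carlsonV_deriv3 :
    HasDerivAt (fun t => (1 - 3 * D) * cos t + D * t * sin t)
      ((4 * D - 1) * sin t + D * t * cos t) t := by
  have := ((hasDerivAt_cos t).const_mul (1 - 3 * D)).add
    (((hasDerivAt_id t).const_mul D).mul (hasDerivAt_sin t))
  exact this.congr_deriv (by simp only [id]; ring)

end

lemma negThenPos_carlsonV {S D : ℝ} (hD : 1 / 3 < D) (hDπ : D < 4 / π ^ 2) (hS : 2 / π < S)
    (hSD : S + D ≤ 1) : NegThenPos (carlsonV S D) 0 (π / 2) := by
  have hπ : 3 < π := pi_gt_three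
  have hD_half : D < 1 / 2 := hDπ.trans (by rw [div_lt_iff₀ (by positivity)]; nlinarith)
  have hDS : D * (π / 2) < S := calc
    D * (π / 2) < 4 / π ^ 2 * (π / 2) := by gcongr
    _ = 2 / π := by field_simp; ring
    _ < S := hS
  have hV₃ : NegThenPos (fun t => (1 - 3 * D) * cos t + D * t * sin t) 0 (π / 2) := by
    have hcont := HasDerivAt.continuousOn fun t (_ : t ∈ Icc 0 (π / 2)) =>
      hasDerivAt_carlsonV_deriv3 D t
    have hmono := strictMonoOn_of_hasDerivWithinAt_pos (convex_Icc _ _) hcont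
      (fun t _ => (hasDerivAt_carlsonV_deriv3 D t).hasDerivWithinAt) fun t ht => by
        rw [interior_Icc] at ht
        exact add_pos (mul_pos (by linarith) (sin_pos_of_pos_of_lt_pi ht.1 (by linarith [ht.2])))
          (mul_pos (mul_pos (by linarith) ht.1) (cos_pos_of_mem_Ioo ⟨by linarith [ht.1], ht.2⟩))
    refine negThenPos_of_strictMonoOn (by positivity) hmono hcont ?_ ?_
    · simp only [cos_zero, sin_zero, mul_one, mul_zero, add_zero]; linarith
    · simp only [cos_pi_div_two, sin_pi_div_two, mul_zero, mul_one, zero_add]; positivity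
  have hV₂ := hV₃.of_hasDerivAt
    (HasDerivAt.continuousOn fun t _ => hasDerivAt_carlsonV_deriv2 D t)
    (fun t _ => hasDerivAt_carlsonV_deriv2 D t) (by simp)
    (by simp only [sin_pi_div_two, cos_pi_div_two, mul_one, mul_zero, sub_zero]; linarith)
  have hV₁ := hV₂.of_hasDerivAt
    (HasDerivAt.continuousOn fun t _ => hasDerivAt_carlsonV_deriv S D t)
    (fun t _ => hasDerivAt_carlsonV_deriv S D t)
    (by simp only [cos_zero, sin_zero, mul_one, mul_zero, sub_zero]; linarith)
    (by simp only [cos_pi_div_two, sin_pi_div_two, mul_zero, mul_one, add_zero, sub_zero]; linarith)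
  exact hV₁.of_hasDerivAt (HasDerivAt.continuousOn fun t _ => hasDerivAt_carlsonV S D t)
    (fun t _ => hasDerivAt_carlsonV S D t) (by simp [carlsonV])
    (by simp only [carlsonV, cos_pi_div_two, sin_pi_div_two, mul_zero, add_zero]
        rw [div_lt_iff₀ pi_pos] at hS; linarith)

lemma hasDerivAt_carlson (a b : ℝ) {x : ℝ} (hx : x ∈ Ioo (-1 : ℝ) 1) :
    HasDerivAt (fun x : ℝ => (1 + x) ^ b * (1 - x) ^ (-a) * arccos x)
      ((1 + x) ^ (b - 1) * (1 - x) ^ (-a - 1) * carlsonV (a + b) (a - b) (arccos x)) x := by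
  have hp : 0 < 1 + x := by linarith [hx.1]
  have hm : 0 < 1 - x := by linarith [hx.2]
  have h := ((((hasDerivAt_id x).const_add 1).rpow_const (p := b) (Or.inl hp.ne')).mul
    (((hasDerivAt_id x).const_sub 1).rpow_const (p := -a) (Or.inl hm.ne'))).mul
    (hasDerivAt_arccos hx.1.ne' hx.2.ne)
  refine h.congr_deriv ?_
  simp only [id, Pi.mul_apply]
  have hx2 : 0 < 1 - x ^ 2 := by nlinarith
  rw [carlsonV, cos_arccos hx.1.le hx.2.le, sin_arccos,
    show (1 + x) ^ b = (1 + x) ^ (b - 1) * (1 + x) by rw [← rpow_add_one hp.ne']; ring_nf,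
    show (1 - x) ^ (-a) = (1 - x) ^ (-a - 1) * (1 - x) by rw [← rpow_add_one hm.ne']; ring_nf]
  have := (sqrt_pos.2 hx2).ne'
  field_simp
  linear_combination mul_self_sqrt hx2.le

theorem carlson_arccos_unique_maximum (a b : ℝ)
    (h1 : 1 / 3 < a - b) (h2 : a - b < 4 / Real.pi ^ 2)
    (h3 : 2 / Real.pi - b < a) (h4 : a ≤ 1 / 2) :
    ∃! x₀ : ℝ, x₀ ∈ Set.Ioo (0 : ℝ) 1 ∧
      StrictMonoOn (fun x : ℝ => (1 + x) ^ b * (1 - x) ^ (-a) * Real.arccos x)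
        (Set.Ioc 0 x₀) ∧
      StrictAntiOn (fun x : ℝ => (1 + x) ^ b * (1 - x) ^ (-a) * Real.arccos x)
        (Set.Ico x₀ 1) := by
  obtain ⟨x₀, hx₀, hpos, hneg⟩ :=
    (negThenPos_carlsonV (S := a + b) h1 h2 (by linarith) (by linarith)).comp_arccos
  have hweight : ∀ x ∈ Ioo (0 : ℝ) 1, 0 < (1 + x) ^ (b - 1) * (1 - x) ^ (-a - 1) :=
    fun x hx =>
      mul_pos (rpow_pos_of_pos (by linarith [hx.1]) _) (rpow_pos_of_pos (by linarith [hx.2]) _)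
  have hf := strictMonoOn_Ioc_and_strictAntiOn_Ico_of_hasDerivAt hx₀
    (fun x hx => hasDerivAt_carlson a b ⟨by linarith [hx.1], hx.2⟩)
    (fun x hx => mul_pos (hweight x ⟨hx.1, hx.2.trans hx₀.2⟩) (hpos x hx))
    (fun x hx => mul_neg_of_pos_of_neg (hweight x ⟨hx₀.1.trans hx.1, hx.2⟩) (hneg x hx))
  exact ⟨x₀, ⟨hx₀, hf⟩, fun y ⟨hy, hfy⟩ =>
    eq_of_strictMonoOn_Ioc_of_strictAntiOn_Ico hy hx₀ hfy.1 hfy.2 hf.1 hf.2⟩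
end

section
/- Let a, b be real numbers and define f_{a,b}(x) = (1+x)^b (1-x)^{-a} · arccos(x) for x ∈ (0,1). If f_{a,b} is strictly increasing on (0,1), then necessarily b ≥ 2/π − a and a ≥ 1/2. -/
/-!
Near `0` the function is `π/2 + ((a + b) π/2 - 1) x + o(x)`; a function increasing on `(0, 1)`
has a nonnegative right derivative at `0`, whence `a + b ≥ 2/π`. Near `1` we have
`arccos x ≤ π √(1 - x)`, so `f_{a,b}(x) = O((1 - x)^(1/2 - a))`. If `a < 1/2` this tends to `0`
as `x → 1⁻`, which is impossible for a positive increasing function.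
-/

open Real Set Filter Topology

section Monotone

variable {α β : Type*} [LinearOrder α] [TopologicalSpace α] [OrderTopology α] [DenselyOrdered α]
  [Preorder β] [TopologicalSpace β] [OrderClosedTopology β] {f : α → β} {a b x : α} {l : β}

theorem MonotoneOn.le_of_tendsto_nhdsLT (hf : MonotoneOn f (Ioo a b))
    (hl : Tendsto f (𝓝[<] b) (𝓝 l)) (hx : x ∈ Ioo a b) : f x ≤ l := by
  have : (𝓝[<] b).NeBot := nhdsLT_neBot_of_exists_lt ⟨x, hx.2⟩
  refine ge_of_tendsto hl ?_
  filter_upwards [Ioo_mem_nhdsLT hx.2] with y hy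
  exact hf hx ⟨hx.1.trans hy.1, hy.2⟩ hy.1.le

theorem MonotoneOn.ge_of_tendsto_nhdsGT (hf : MonotoneOn f (Ioo a b))
    (hl : Tendsto f (𝓝[>] a) (𝓝 l)) (hx : x ∈ Ioo a b) : l ≤ f x := by
  have : (𝓝[>] a).NeBot := nhdsGT_neBot_of_exists_gt ⟨x, hx.1⟩
  refine le_of_tendsto hl ?_
  filter_upwards [Ioo_mem_nhdsGT hx.1] with y hy
  exact hf ⟨hy.1, hy.2.trans hx.2⟩ hx hy.2.le

end Monotone

theorem MonotoneOn.nonneg_of_hasDerivWithinAt_Ioi {f : ℝ → ℝ} {f' a b : ℝ}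
    (hf : MonotoneOn f (Ioo a b)) (hab : a < b) (hd : HasDerivWithinAt f f' (Ioi a) a) :
    0 ≤ f' := by
  have hmin : ∀ x ∈ Ioo a b, f a ≤ f x := fun x hx ↦
    hf.ge_of_tendsto_nhdsGT hd.continuousWithinAt.tendsto hx
  refine ge_of_tendsto ((hasDerivWithinAt_iff_tendsto_slope' self_notMem_Ioi).mp hd) ?_
  filter_upwards [Ioo_mem_nhdsGT hab] with x hx
  rw [slope_def_field]
  exact div_nonneg (sub_nonneg.mpr (hmin x hx)) (sub_nonneg.mpr hx.1.le)

theorem Real.arccos_le_pi_mul_sqrt_one_sub (x : ℝ) : arccos x ≤ π * √(1 - x) := by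
  rcases le_or_gt x (-1) with hx | hx
  · rw [arccos_of_le_neg_one hx]
    exact le_mul_of_one_le_right pi_pos.le (one_le_sqrt.mpr (by linarith))
  rcases le_or_gt 1 x with hx' | hx'
  · rw [arccos_of_one_le hx']
    positivity
  have hθ := arccos_nonneg x
  have hcos : cos (arccos x) ≤ 1 - 2 / π ^ 2 * arccos x ^ 2 :=
    cos_le_one_sub_mul_cos_sq (by rw [abs_of_nonneg hθ]; exact arccos_le_pi x)
  rw [cos_arccos hx.le hx'.le] at hcos
  have hsq : arccos x ^ 2 ≤ π ^ 2 * (1 - x) := by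
    have h2 : 2 * arccos x ^ 2 ≤ (1 - x) * π ^ 2 := by
      rw [div_mul_eq_mul_div] at hcos
      rw [← div_le_iff₀ (by positivity)]
      linarith
    linarith [sq_nonneg (arccos x)]
  rwa [← pow_le_pow_iff_left₀ hθ (by positivity) two_ne_zero, mul_pow,
    sq_sqrt (by linarith)]

noncomputable def carlsonArccos (a b x : ℝ) : ℝ :=
  (1 + x) ^ b * (1 - x) ^ (-a) * arccos x

namespace carlsonArccos

variable (a b : ℝ)

theorem hasDerivAt_zero : HasDerivAt (carlsonArccos a b) ((b + a) * (π / 2) - 1) 0 := by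
  have hu : HasDerivAt (fun x : ℝ ↦ (1 + x) ^ b) b 0 := by
    simpa using ((hasDerivAt_id (0 : ℝ)).const_add 1).rpow_const (p := b) (Or.inl (by norm_num))
  have hv : HasDerivAt (fun x : ℝ ↦ (1 - x) ^ (-a)) a 0 := by
    simpa using ((hasDerivAt_id (0 : ℝ)).const_sub 1).rpow_const (p := -a) (Or.inl (by norm_num))
  have hw : HasDerivAt arccos (-1) 0 := by
    simpa using hasDerivAt_arccos (x := 0) (by norm_num) (by norm_num)
  refine ((hu.mul hv).mul hw).congr_deriv ?_
  norm_num [arccos_zero]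
  ring

theorem pos {x : ℝ} (hx : x ∈ Ioo (-1) 1) : 0 < carlsonArccos a b x := by
  have h1 : 0 < 1 + x := by linarith [hx.1]
  have h2 : 0 < 1 - x := by linarith [hx.2]
  exact mul_pos (mul_pos (rpow_pos_of_pos h1 b) (rpow_pos_of_pos h2 (-a))) (arccos_pos.mpr hx.2)

theorem le_pi_mul_one_sub_rpow {x : ℝ} (hx₀ : 0 ≤ x) (hx₁ : x < 1) :
    carlsonArccos a b x ≤ π * 2 ^ max b 0 * (1 - x) ^ (1 / 2 - a) := by
  have h1 : 0 < 1 - x := by linarith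
  have hpow : (1 + x) ^ b ≤ 2 ^ max b 0 :=
    calc (1 + x) ^ b ≤ (1 + x) ^ max b 0 := rpow_le_rpow_of_exponent_le (by linarith) le_sup_left
      _ ≤ 2 ^ max b 0 := rpow_le_rpow (by linarith) (by linarith) le_sup_right
  calc carlsonArccos a b x = (1 + x) ^ b * ((1 - x) ^ (-a) * arccos x) := mul_assoc _ _ _
    _ ≤ 2 ^ max b 0 * ((1 - x) ^ (-a) * (π * √(1 - x))) := by
      gcongr
      · exact mul_nonneg (by positivity) (arccos_nonneg x)
      · exact arccos_le_pi_mul_sqrt_one_sub x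
    _ = π * 2 ^ max b 0 * (1 - x) ^ (1 / 2 - a) := by
      rw [sqrt_eq_rpow, show 1 / 2 - a = -a + 1 / 2 by ring, rpow_add h1]
      ring

theorem tendsto_nhdsLT_one {a : ℝ} (ha : a < 1 / 2) :
    Tendsto (carlsonArccos a b) (𝓝[<] 1) (𝓝 0) := by
  have hbound : Tendsto (fun x : ℝ ↦ π * 2 ^ max b 0 * (1 - x) ^ (1 / 2 - a)) (𝓝[<] 1) (𝓝 0) := by
    have hc : Continuous fun x : ℝ ↦ (1 - x) ^ (1 / 2 - a) :=
      (continuous_const.sub continuous_id).rpow_const fun _ ↦ Or.inr (by linarith)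
    have := ((hc.tendsto 1).const_mul (π * 2 ^ max b 0)).mono_left (nhdsWithin_le_nhds (s := Iio 1))
    rwa [sub_self, zero_rpow (by linarith), mul_zero] at this
  have hnear : ∀ᶠ x in 𝓝[<] (1 : ℝ), x ∈ Ioo 0 1 := Ioo_mem_nhdsLT one_pos
  refine tendsto_of_tendsto_of_tendsto_of_le_of_le' tendsto_const_nhds hbound ?_ ?_
  · filter_upwards [hnear] with x hx
    exact (pos a b ⟨by linarith [hx.1], hx.2⟩).le
  · filter_upwards [hnear] with x hx
    exact le_pi_mul_one_sub_rpow a b hx.1.le hx.2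

end carlsonArccos

theorem carlson_arccos_strict_mono_necessary (a b : ℝ)
    (h : StrictMonoOn (fun x : ℝ => (1 + x) ^ b * (1 - x) ^ (-a) * Real.arccos x)
      (Set.Ioo 0 1)) :
    b ≥ 2 / Real.pi - a ∧ a ≥ 1 / 2 := by
  have hmono : MonotoneOn (carlsonArccos a b) (Ioo 0 1) := h.monotoneOn
  constructor
  · have hd := hmono.nonneg_of_hasDerivWithinAt_Ioi one_pos
      (carlsonArccos.hasDerivAt_zero a b).hasDerivWithinAt
    rw [ge_iff_le, sub_le_iff_le_add, div_le_iff₀ pi_pos]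
    linarith
  · by_contra! ha
    have hle := hmono.le_of_tendsto_nhdsLT (carlsonArccos.tendsto_nhdsLT_one b ha)
      (show (1 / 2 : ℝ) ∈ Ioo 0 1 by norm_num)
    exact (carlsonArccos.pos a b (by norm_num)).not_ge hle
end

section
/- Let b be a real number with b ≥ 1/6. Then for every x ∈ (0,1), the double inequality (π/2) · (1−x)^{1/2} / (1+x)^b < arccos(x) < 2^{b+1/2} · (1−x)^{1/2} / (1+x)^b holds. -/
/-!
Substituting `x = cos 2u` with `0 < u < π/4` gives `arccos x = 2u`, `√(1 - x) = √2 sin u` and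
`√(1 + x) = √2 cos u`, so after cubing, the case `b = 1/6` becomes `u³ cos u < sin³ u` and
`π³ sin³ u < 32 u³ cos u`. The first follows from Taylor bounds. For the second,
`sin³ u / (u³ cos u)` increases on `(0, π/2)` (its derivative has the sign of Cusa's
inequality `3 sin v < v (2 + cos v)` at `v = 2u`) and equals `32 / π³` at `π/4`.
Larger `b` only weakens both bounds, since `1 + x` lies between `1` and `2`.
-/

open Real Set

lemma apply_zero_le_of_deriv_nonneg {f : ℝ → ℝ} (hf : Differentiable ℝ f)
    (hf' : ∀ t, 0 < t → 0 ≤ deriv f t) {x : ℝ} (hx : 0 ≤ x) : f 0 ≤ f x :=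
  monotoneOn_of_deriv_nonneg (convex_Ici 0) hf.continuous.continuousOn hf.differentiableOn
    (fun t ht ↦ hf' t (by simpa using ht)) self_mem_Ici hx hx

namespace Real

lemma cos_le_taylor_four {x : ℝ} (hx : 0 ≤ x) : cos x ≤ 1 - x ^ 2 / 2 + x ^ 4 / 24 := by
  have := apply_zero_le_of_deriv_nonneg (f := fun t ↦ 1 - t ^ 2 / 2 + t ^ 4 / 24 - cos t)
    (by fun_prop) (fun t ht ↦ ?_) hx
  · simpa using this
  · simp (disch := fun_prop) only [deriv_fun_sub, deriv_fun_add, deriv_const', deriv_id'',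
      deriv_div_const, deriv_fun_pow, deriv_cos', Nat.cast_ofNat]
    nlinarith [sin_ge_sub_cube ht.le]

lemma sin_le_taylor_five {x : ℝ} (hx : 0 ≤ x) : sin x ≤ x - x ^ 3 / 6 + x ^ 5 / 120 := by
  have := apply_zero_le_of_deriv_nonneg (f := fun t ↦ t - t ^ 3 / 6 + t ^ 5 / 120 - sin t)
    (by fun_prop) (fun t ht ↦ ?_) hx
  · simpa using this
  · simp (disch := fun_prop) only [deriv_fun_sub, deriv_fun_add, deriv_id'', deriv_div_const,
      deriv_fun_pow, deriv_sin, Nat.cast_ofNat]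
    nlinarith [cos_le_taylor_four ht.le]

lemma taylor_six_le_cos {x : ℝ} (hx : 0 ≤ x) :
    1 - x ^ 2 / 2 + x ^ 4 / 24 - x ^ 6 / 720 ≤ cos x := by
  have := apply_zero_le_of_deriv_nonneg
    (f := fun t ↦ cos t - (1 - t ^ 2 / 2 + t ^ 4 / 24 - t ^ 6 / 720)) (by fun_prop)
    (fun t ht ↦ ?_) hx
  · simpa using this
  · simp (disch := fun_prop) only [deriv_fun_sub, deriv_fun_add, deriv_const', deriv_id'',
      deriv_div_const, deriv_fun_pow, deriv_cos', Nat.cast_ofNat]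
    nlinarith [sin_le_taylor_five ht.le]

lemma three_mul_sin_lt_mul_two_add_cos {v : ℝ} (hv₀ : 0 < v) (hv : v < π) :
    3 * sin v < v * (2 + cos v) := by
  have hv₂ : v ^ 2 < 12 := by nlinarith [pi_lt_d2]
  nlinarith [sin_le_taylor_five hv₀.le,
    mul_le_mul_of_nonneg_left (taylor_six_le_cos hv₀.le) hv₀.le,
    mul_pos (pow_pos hv₀ 5) (sub_pos.2 hv₂)]

lemma pow_three_mul_cos_lt_sin_pow_three {u : ℝ} (hu₀ : 0 < u) (hu : u < π / 2) :
    u ^ 3 * cos u < sin u ^ 3 := by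
  have hu₂ : u ^ 2 < 3 := by nlinarith [pi_lt_d2]
  have hsin : (u - u ^ 3 / 6) ^ 3 ≤ sin u ^ 3 :=
    pow_le_pow_left₀ (by nlinarith) (sin_ge_sub_cube hu₀.le) 3
  nlinarith [mul_le_mul_of_nonneg_left (cos_le_taylor_four hu₀.le) (pow_pos hu₀ 3).le,
    mul_pos (pow_pos hu₀ 7) (by linarith : (0:ℝ) < 9 - u ^ 2)]

lemma strictMonoOn_sin_pow_three_div :
    StrictMonoOn (fun u ↦ sin u ^ 3 / (u ^ 3 * cos u)) (Ioo 0 (π / 2)) := by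
  have hden {y : ℝ} (hy : y ∈ Ioo 0 (π / 2)) : 0 < y ^ 3 * cos y :=
    mul_pos (pow_pos hy.1 3) (cos_pos_of_mem_Ioo ⟨by linarith [hy.1, pi_pos], hy.2⟩)
  refine strictMonoOn_of_deriv_pos (convex_Ioo _ _)
    (ContinuousOn.div (by fun_prop) (by fun_prop) fun y hy ↦ (hden hy).ne') fun y hy ↦ ?_
  rw [interior_Ioo] at hy
  have hderiv := ((hasDerivAt_sin y).fun_pow 3).fun_div
    ((hasDerivAt_pow 3 y).fun_mul (hasDerivAt_cos y)) (hden hy).ne'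
  rw [hderiv.deriv]
  refine div_pos ?_ (pow_pos (hden hy) 2)
  have hcusa := three_mul_sin_lt_mul_two_add_cos (v := 2 * y) (by linarith [hy.1])
    (by linarith [hy.2])
  rw [sin_two_mul, cos_two_mul] at hcusa
  have hkey : 3 * sin y * cos y < y * (3 * cos y ^ 2 + sin y ^ 2) := by
    have hy₁ : y * (sin y ^ 2 + cos y ^ 2) = y := by rw [sin_sq_add_cos_sq, mul_one]
    linarith
  have hs : 0 < sin y := sin_pos_of_pos_of_lt_pi hy.1 (by linarith [hy.2, pi_pos])
  push_cast
  nlinarith [mul_pos (mul_pos (pow_pos hy.1 2) (pow_pos hs 2)) (sub_pos.2 hkey)]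

lemma pi_pow_three_mul_sin_pow_three_lt {u : ℝ} (hu₀ : 0 < u) (hu : u < π / 4) :
    π ^ 3 * sin u ^ 3 < 32 * (u ^ 3 * cos u) := by
  have hlt := strictMonoOn_sin_pow_three_div ⟨hu₀, by linarith [pi_pos]⟩
    ⟨by positivity, by linarith [pi_pos]⟩ hu
  have hc : 0 < cos u := cos_pos_of_mem_Ioo ⟨by linarith, by linarith [pi_pos]⟩
  simp only [sin_pi_div_four, cos_pi_div_four] at hlt
  rw [div_lt_div_iff₀ (by positivity) (by positivity)] at hlt
  have h2 : √2 ^ 2 = 2 := sq_sqrt zero_le_two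
  have h3 : (√2 / 2) ^ 3 = √2 / 2 * (1 / 2) := by linear_combination (√2 / 8) * h2
  rw [h3] at hlt
  have hcancel : √2 / 2 * (π ^ 3 * sin u ^ 3) < √2 / 2 * (32 * (u ^ 3 * cos u)) := by linarith
  exact lt_of_mul_lt_mul_left hcancel (by positivity)

lemma sqrt_one_add_eq_sqrt_two_mul_cos_half_arccos {x : ℝ} (hx₁ : -1 ≤ x) (hx₂ : x ≤ 1) :
    √(1 + x) = √2 * cos (arccos x / 2) := by
  rw [cos_half (by linarith [arccos_nonneg x, pi_pos]) (arccos_le_pi x), cos_arccos hx₁ hx₂,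
    ← sqrt_mul zero_le_two]
  ring_nf

lemma sqrt_one_sub_eq_sqrt_two_mul_sin_half_arccos {x : ℝ} (hx₁ : -1 ≤ x) (hx₂ : x ≤ 1) :
    √(1 - x) = √2 * sin (arccos x / 2) := by
  rw [sin_half_eq_sqrt (arccos_nonneg x) (by linarith [arccos_le_pi x, pi_pos]),
    cos_arccos hx₁ hx₂, ← sqrt_mul zero_le_two]
  ring_nf

lemma arccos_pow_three_mul_sqrt_lt {x : ℝ} (hx₁ : -1 < x) (hx₂ : x < 1) :
    arccos x ^ 3 * √(1 + x) < 4 * √(1 - x) ^ 3 := by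
  have hu₀ : 0 < arccos x / 2 := by linarith [arccos_pos.2 hx₂]
  have hu : arccos x / 2 < π / 2 := by linarith [arccos_lt_pi.2 hx₁]
  rw [sqrt_one_add_eq_sqrt_two_mul_cos_half_arccos hx₁.le hx₂.le,
    sqrt_one_sub_eq_sqrt_two_mul_sin_half_arccos hx₁.le hx₂.le]
  set u := arccos x / 2
  have h2 : √2 ^ 2 = 2 := sq_sqrt zero_le_two
  calc arccos x ^ 3 * (√2 * cos u) = 8 * √2 * (u ^ 3 * cos u) := by ring
    _ < 8 * √2 * sin u ^ 3 :=
        mul_lt_mul_of_pos_left (pow_three_mul_cos_lt_sin_pow_three hu₀ hu) (by positivity)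
    _ = 4 * (√2 * sin u) ^ 3 := by linear_combination (-4 * √2 * sin u ^ 3) * h2

lemma pi_div_two_pow_three_mul_sqrt_lt {x : ℝ} (hx₁ : 0 < x) (hx₂ : x < 1) :
    (π / 2) ^ 3 * √(1 - x) ^ 3 < arccos x ^ 3 * √(1 + x) := by
  have hu₀ : 0 < arccos x / 2 := by linarith [arccos_pos.2 hx₂]
  have hu : arccos x / 2 < π / 4 := by linarith [arccos_lt_pi_div_two.2 hx₁]
  rw [sqrt_one_add_eq_sqrt_two_mul_cos_half_arccos (by linarith) hx₂.le,
    sqrt_one_sub_eq_sqrt_two_mul_sin_half_arccos (by linarith) hx₂.le]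
  set u := arccos x / 2
  have h2 : √2 ^ 2 = 2 := sq_sqrt zero_le_two
  calc (π / 2) ^ 3 * (√2 * sin u) ^ 3 = √2 / 4 * (π ^ 3 * sin u ^ 3) := by
        linear_combination (π ^ 3 * √2 * sin u ^ 3 / 8) * h2
    _ < √2 / 4 * (32 * (u ^ 3 * cos u)) :=
        mul_lt_mul_of_pos_left (pi_pow_three_mul_sin_pow_three_lt hu₀ hu) (by positivity)
    _ = arccos x ^ 3 * (√2 * cos u) := by ring

lemma rpow_one_div_six_pow_three {y : ℝ} (hy : 0 ≤ y) : (y ^ (1 / 6 : ℝ)) ^ 3 = √y := by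
  rw [← rpow_natCast, ← rpow_mul hy, sqrt_eq_rpow]
  norm_num

lemma pi_div_two_mul_sqrt_lt_arccos_mul_rpow {x : ℝ} (hx₁ : 0 < x) (hx₂ : x < 1) :
    π / 2 * √(1 - x) < arccos x * (1 + x) ^ (1 / 6 : ℝ) := by
  refine lt_of_pow_lt_pow_left₀ 3 (mul_nonneg (arccos_nonneg x) (by positivity)) ?_
  rw [mul_pow, mul_pow, rpow_one_div_six_pow_three (by linarith)]
  exact pi_div_two_pow_three_mul_sqrt_lt hx₁ hx₂

lemma arccos_mul_rpow_lt {x : ℝ} (hx₁ : -1 < x) (hx₂ : x < 1) :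
    arccos x * (1 + x) ^ (1 / 6 : ℝ) < 2 ^ (2 / 3 : ℝ) * √(1 - x) := by
  refine lt_of_pow_lt_pow_left₀ 3 (by positivity) ?_
  have h4 : ((2 : ℝ) ^ (2 / 3 : ℝ)) ^ 3 = 4 := by
    rw [← rpow_natCast, ← rpow_mul zero_le_two]
    norm_num
  rw [mul_pow, mul_pow, rpow_one_div_six_pow_three (by linarith), h4]
  exact arccos_pow_three_mul_sqrt_lt hx₁ hx₂

end Real

theorem carlson_arccos_double_ineq (b : ℝ) (hb : b ≥ 1 / 6) :
    ∀ x ∈ Set.Ioo (0 : ℝ) 1,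
      Real.pi / 2 * (1 - x) ^ ((1 : ℝ) / 2) / (1 + x) ^ b < Real.arccos x ∧
      Real.arccos x < (2 : ℝ) ^ (b + 1 / 2) * (1 - x) ^ ((1 : ℝ) / 2) / (1 + x) ^ b := by
  rintro x ⟨hx₁, hx₂⟩
  rw [← sqrt_eq_rpow]
  have hy : 0 < 1 + x := by linarith
  constructor
  · calc π / 2 * √(1 - x) / (1 + x) ^ b ≤ π / 2 * √(1 - x) / (1 + x) ^ (1 / 6 : ℝ) :=
          div_le_div_of_nonneg_left (by positivity) (by positivity)
            (rpow_le_rpow_of_exponent_le (by linarith) hb)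
      _ < arccos x := by
          rw [div_lt_iff₀ (by positivity)]
          exact pi_div_two_mul_sqrt_lt_arccos_mul_rpow hx₁ hx₂
  · calc arccos x < 2 ^ (2 / 3 : ℝ) * √(1 - x) / (1 + x) ^ (1 / 6 : ℝ) := by
          rw [lt_div_iff₀ (by positivity)]
          exact arccos_mul_rpow_lt (by linarith) hx₂
      _ ≤ 2 ^ (2 / 3 : ℝ) * √(1 - x) / (1 + x) ^ (1 / 6 : ℝ) *
            (2 / (1 + x)) ^ (b - 1 / 6) :=
          le_mul_of_one_le_right (by positivity)
            (one_le_rpow ((one_le_div hy).2 (by linarith)) (by linarith))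
      _ = 2 ^ (b + 1 / 2) * √(1 - x) / (1 + x) ^ b := by
          have h2 : (2 : ℝ) ^ (b + 1 / 2) = 2 ^ (2 / 3 : ℝ) * 2 ^ (b - 1 / 6) := by
            rw [← rpow_add two_pos]; ring_nf
          have hy' : (1 + x) ^ b = (1 + x) ^ (1 / 6 : ℝ) * (1 + x) ^ (b - 1 / 6) := by
            rw [← rpow_add hy]; ring_nf
          rw [div_rpow zero_le_two hy.le, h2, hy']
          field_simp
end

section
/- Let b be a real number. If the inequality arccos(x) < 2^{b+1/2} · (1−x)^{1/2} / (1+x)^b holds for every x ∈ (0,1), then b ≥ 1/6. (Together with the sufficiency, this inequality holds on (0,1) if and only if b ≥ 1/6.) -/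
/-!
Write `y = √((1 - x) / 2)`, so that `arccos x = 2 arcsin y`. Since `sin z + sin³ z / 6 ≤ z` for
`z ≥ 0`, we get `arccos x ≥ 2 (y + y³ / 6) = √(2 (1 - x)) (1 + (1 - x) / 12)`. The right-hand side
of the hypothesis is `√(2 (1 - x)) (1 + s) ^ b` with `s = (1 - x) / (1 + x)`, and Bernoulli's
inequality bounds `(1 + s) ^ b` by `1 + b s`. Hence `(1 - x) / 12 < b (1 - x) / (1 + x)`, i.e.
`12 b > 1 + x`, which fails for `x` close to `1` when `b < 1 / 6`.
-/

open Real Set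

lemma sin_add_sin_pow_three_div_six_le {z : ℝ} (hz : 0 ≤ z) : sin z + sin z ^ 3 / 6 ≤ z := by
  let f : ℝ → ℝ := fun t ↦ t - sin t - sin t ^ 3 / 6
  have hf : ∀ t, HasDerivAt f (1 - cos t - ((3 : ℕ) * sin t ^ 2 * cos t) / 6) t := fun t ↦
    ((hasDerivAt_id' t).sub (hasDerivAt_sin t)).sub (((hasDerivAt_sin t).pow 3).div_const 6)
  -- With `c = cos t`, the derivative is `(c - 1)² (c + 2) / 2`.
  have hf' : ∀ t, 0 ≤ 1 - cos t - ((3 : ℕ) * sin t ^ 2 * cos t) / 6 := by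
    intro t
    have hcos : -1 ≤ cos t := neg_one_le_cos t
    have hsin : sin t ^ 2 = 1 - cos t ^ 2 := sin_sq t
    rw [hsin]
    push_cast
    nlinarith [mul_nonneg (sq_nonneg (cos t - 1)) (by linarith : 0 ≤ cos t + 2)]
  have := monotone_of_hasDerivAt_nonneg hf hf' hz
  simp only [f, sin_zero] at this
  linarith

lemma add_pow_three_div_six_le_arcsin {y : ℝ} (hy₀ : 0 ≤ y) (hy₁ : y ≤ 1) :
    y + y ^ 3 / 6 ≤ arcsin y := by
  simpa [sin_arcsin (by linarith) hy₁] using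
    sin_add_sin_pow_three_div_six_le (arcsin_nonneg.2 hy₀)

lemma arccos_eq_two_mul_arcsin_sqrt {x : ℝ} (hx₀ : -1 ≤ x) (hx₁ : x ≤ 1) :
    arccos x = 2 * arcsin √((1 - x) / 2) := by
  set y := √((1 - x) / 2)
  have hy₀ : 0 ≤ y := sqrt_nonneg _
  have hy : y ^ 2 = (1 - x) / 2 := sq_sqrt (by linarith)
  have hcos : cos (2 * arcsin y) = x := by
    rw [cos_two_mul, cos_arcsin, sq_sqrt (by nlinarith)]
    linarith
  refine injOn_cos ⟨arccos_nonneg x, arccos_le_pi x⟩ ⟨?_, ?_⟩ ?_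
  · linarith [arcsin_nonneg.2 hy₀]
  · linarith [arcsin_le_pi_div_two y]
  · rw [cos_arccos hx₀ hx₁, hcos]

lemma sqrt_two_mul_one_sub_mul_le_arccos {x : ℝ} (hx₀ : -1 ≤ x) (hx₁ : x ≤ 1) :
    √(2 * (1 - x)) * (1 + (1 - x) / 12) ≤ arccos x := by
  set y := √((1 - x) / 2)
  have hy₀ : 0 ≤ y := sqrt_nonneg _
  have hy : y ^ 2 = (1 - x) / 2 := sq_sqrt (by linarith)
  have hy₁ : y ≤ 1 := by nlinarith
  have hsqrt : √(2 * (1 - x)) = 2 * y := by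
    rw [show 2 * (1 - x) = 2 ^ 2 * ((1 - x) / 2) by ring, sqrt_mul (by positivity),
      sqrt_sq zero_le_two]
  calc √(2 * (1 - x)) * (1 + (1 - x) / 12) = 2 * (y + y ^ 3 / 6) := by
        rw [hsqrt, pow_succ, hy]; ring
    _ ≤ 2 * arcsin y := by linarith [add_pow_three_div_six_le_arcsin hy₀ hy₁]
    _ = arccos x := (arccos_eq_two_mul_arcsin_sqrt hx₀ hx₁).symm

lemma two_rpow_mul_sqrt_div_rpow_eq {x : ℝ} (b : ℝ) (hx₀ : -1 < x) (hx₁ : x ≤ 1) :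
    (2 : ℝ) ^ (b + 1 / 2) * (1 - x) ^ ((1 : ℝ) / 2) / (1 + x) ^ b
      = √(2 * (1 - x)) * (2 / (1 + x)) ^ b := by
  rw [rpow_add two_pos, div_rpow zero_le_two (by linarith), sqrt_eq_rpow,
    mul_rpow zero_le_two (by linarith)]
  field_simp

lemma two_div_one_add_rpow_le {x b : ℝ} (hx₀ : -1 < x) (hx₁ : x ≤ 1) (hb : 12 * b ≤ 1 + x) :
    (2 / (1 + x)) ^ b ≤ 1 + (1 - x) / 12 := by
  have hpos : 0 < 1 + x := by linarith
  have hs : 2 / (1 + x) = 1 + (1 - x) / (1 + x) := by field_simp; ring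
  rcases le_or_gt b 0 with hb₀ | hb₀
  · have : (2 / (1 + x)) ^ b ≤ 1 :=
      rpow_le_one_of_one_le_of_nonpos (by rw [le_div_iff₀ hpos]; linarith) hb₀
    linarith
  · have hbern := rpow_one_add_le_one_add_mul_self
      (by linarith [div_nonneg (by linarith : 0 ≤ 1 - x) hpos.le]) hb₀.le (by linarith)
    rw [← hs] at hbern
    have : b * ((1 - x) / (1 + x)) ≤ (1 - x) / 12 := by
      rw [mul_div_assoc', div_le_div_iff₀ hpos (by norm_num)]
      nlinarith
    linarith

theorem carlson_arccos_upper_necessary (b : ℝ)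
    (h : ∀ x ∈ Set.Ioo (0 : ℝ) 1,
      Real.arccos x < (2 : ℝ) ^ (b + 1 / 2) * (1 - x) ^ ((1 : ℝ) / 2) / (1 + x) ^ b) :
    b ≥ 1 / 6 := by
  by_contra! hb
  set x : ℝ := max (1 / 2) (12 * b - 1)
  have hx₀ : 0 < x := lt_max_of_lt_left (by norm_num)
  have hx₁ : x < 1 := max_lt (by norm_num) (by linarith)
  have hbx : 12 * b ≤ 1 + x := by linarith [le_max_right (1 / 2 : ℝ) (12 * b - 1)]
  have := h x ⟨hx₀, hx₁⟩
  rw [two_rpow_mul_sqrt_div_rpow_eq b (by linarith) hx₁.le] at this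
  have hupper := mul_le_mul_of_nonneg_left (two_div_one_add_rpow_le (by linarith) hx₁.le hbx)
    (sqrt_nonneg (2 * (1 - x)))
  linarith [sqrt_two_mul_one_sub_mul_le_arccos (by linarith) hx₁.le]
end

section
/- Let b be a real number with b ≤ 2/π − 1/2. Then for every x ∈ (0,1), the reversed double inequality 2^{b+1/2} · (1−x)^{1/2} / (1+x)^b < arccos(x) < (π/2) · (1−x)^{1/2} / (1+x)^b holds. -/
open Real Set Filter Topology

/-!
Put `b₀ = 2 / π - 1 / 2` and `θ = arccos x ∈ (0, π / 2)`. For `b = b₀`, taking logarithms turns the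
two bounds into `(2 / π) log 2 < carlsonLog θ < log (π / 2) = carlsonLog (π / 2)`, where
`carlsonLog θ = log θ + b₀ log (1 + cos θ) - ½ log (1 - cos θ)`. Both follow from `carlsonLog` being
strictly increasing on `(0, π / 2]`; for the lower one, `1 - cos θ ≤ θ² / 2` bounds `carlsonLog`
below by a function tending to `(2 / π) log 2` at `0⁺`.

The derivative of `carlsonLog` has the sign of `D θ = π sin θ - θ (2 + (π - 2) cos θ)`. Here
`D`, `D'`, `D''` vanish at `0`, `D'''` decreases from a positive to a negative value on
`[0, π / 2]`, `D''` and `D'` are negative at `π / 2` and `D (π / 2) = 0`. So `D'''`, `D''`, `D'`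
each change sign once, from `+` to `-`, and `D > 0` on `(0, π / 2)`.

Since `1 < 1 + x < 2`, lowering `b` below `b₀` only weakens both bounds.
-/

section SignChange

variable {f f' : ℝ → ℝ} {a b : ℝ}

def PosThenNeg (f : ℝ → ℝ) (a b : ℝ) : Prop :=
  ∃ c ∈ Ioo a b, (∀ x ∈ Ioo a c, 0 < f x) ∧ ∀ x ∈ Ioo c b, f x < 0

theorem strictMonoOn_Icc_of_hasDerivAt_pos (hf : ∀ x ∈ Icc a b, HasDerivAt f (f' x) x)
    (hf' : ∀ x ∈ Ioo a b, 0 < f' x) : StrictMonoOn f (Icc a b) :=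
  strictMonoOn_of_deriv_pos (convex_Icc a b) (fun x hx ↦ (hf x hx).continuousAt.continuousWithinAt)
    fun x hx ↦ by
      rw [interior_Icc] at hx
      rw [(hf x (Ioo_subset_Icc_self hx)).deriv]
      exact hf' x hx

theorem strictAntiOn_Icc_of_hasDerivAt_neg (hf : ∀ x ∈ Icc a b, HasDerivAt f (f' x) x)
    (hf' : ∀ x ∈ Ioo a b, f' x < 0) : StrictAntiOn f (Icc a b) :=
  strictAntiOn_of_deriv_neg (convex_Icc a b) (fun x hx ↦ (hf x hx).continuousAt.continuousWithinAt)
    fun x hx ↦ by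
      rw [interior_Icc] at hx
      rw [(hf x (Ioo_subset_Icc_self hx)).deriv]
      exact hf' x hx

theorem StrictAntiOn.posThenNeg (hab : a ≤ b) (hcont : ContinuousOn f (Icc a b))
    (hanti : StrictAntiOn f (Icc a b)) (ha : 0 < f a) (hb : f b < 0) : PosThenNeg f a b := by
  obtain ⟨c, hc, hfc⟩ := intermediate_value_Icc' hab hcont ⟨hb.le, ha.le⟩
  have hca : c ≠ a := by rintro rfl; exact ha.ne' hfc
  have hcb : c ≠ b := by rintro rfl; exact hb.ne hfc
  refine ⟨c, ⟨lt_of_le_of_ne hc.1 hca.symm, lt_of_le_of_ne hc.2 hcb⟩, fun x hx ↦ ?_, fun x hx ↦ ?_⟩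
  · exact hfc ▸ hanti (Ioo_subset_Icc_self ⟨hx.1, hx.2.trans_le hc.2⟩) hc hx.2
  · exact hfc ▸ hanti hc (Ioo_subset_Icc_self ⟨hc.1.trans_lt hx.1, hx.2⟩) hx.1

theorem strictMonoOn_strictAntiOn_of_hasDerivAt (hf : ∀ x ∈ Icc a b, HasDerivAt f (f' x) x)
    {c : ℝ} (hc : c ∈ Ioo a b) (hpos : ∀ x ∈ Ioo a c, 0 < f' x) (hneg : ∀ x ∈ Ioo c b, f' x < 0) :
    StrictMonoOn f (Icc a c) ∧ StrictAntiOn f (Icc c b) :=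
  ⟨strictMonoOn_Icc_of_hasDerivAt_pos (fun x hx ↦ hf x ⟨hx.1, hx.2.trans hc.2.le⟩) hpos,
    strictAntiOn_Icc_of_hasDerivAt_neg (fun x hx ↦ hf x ⟨hc.1.le.trans hx.1, hx.2⟩) hneg⟩

theorem posThenNeg_of_hasDerivAt (hf : ∀ x ∈ Icc a b, HasDerivAt f (f' x) x)
    (hf' : PosThenNeg f' a b) (ha : 0 ≤ f a) (hb : f b < 0) : PosThenNeg f a b := by
  obtain ⟨c, hc, hpos, hneg⟩ := hf'
  obtain ⟨hmono, hanti⟩ := strictMonoOn_strictAntiOn_of_hasDerivAt hf hc hpos hneg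
  have hfc : 0 < f c := ha.trans_lt (hmono (left_mem_Icc.2 hc.1.le) (right_mem_Icc.2 hc.1.le) hc.1)
  obtain ⟨d, hd, hposd, hnegd⟩ := hanti.posThenNeg hc.2.le
    (fun x hx ↦ (hf x ⟨hc.1.le.trans hx.1, hx.2⟩).continuousAt.continuousWithinAt) hfc hb
  refine ⟨d, ⟨hc.1.trans hd.1, hd.2⟩, fun x hx ↦ ?_, hnegd⟩
  rcases le_or_gt x c with hxc | hxc
  · exact ha.trans_lt (hmono (left_mem_Icc.2 hc.1.le) ⟨hx.1.le, hxc⟩ hx.1)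
  · exact hposd x ⟨hxc, hx.2⟩

theorem PosThenNeg.pos_of_hasDerivAt (hf' : PosThenNeg f' a b)
    (hf : ∀ x ∈ Icc a b, HasDerivAt f (f' x) x) (ha : 0 ≤ f a) (hb : 0 ≤ f b) :
    ∀ x ∈ Ioo a b, 0 < f x := by
  obtain ⟨c, hc, hpos, hneg⟩ := hf'
  obtain ⟨hmono, hanti⟩ := strictMonoOn_strictAntiOn_of_hasDerivAt hf hc hpos hneg
  intro x hx
  rcases le_or_gt x c with hxc | hxc
  · exact ha.trans_lt (hmono (left_mem_Icc.2 hc.1.le) ⟨hx.1.le, hxc⟩ hx.1)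
  · exact hb.trans_lt (hanti ⟨hxc.le, hx.2.le⟩ (right_mem_Icc.2 hc.2.le) hx.2)

end SignChange

theorem mul_two_add_mul_cos_lt_pi_mul_sin {s : ℝ} (hs₀ : 0 < s) (hs : s < π / 2) :
    s * (2 + (π - 2) * cos s) < π * sin s := by
  have hπ₃ := pi_gt_three
  have hπ := pi_lt_d2
  have hD : ∀ x, HasDerivAt (fun s ↦ π * sin s - s * (2 + (π - 2) * cos s))
      (2 * cos x - 2 + (π - 2) * (x * sin x)) x := fun x ↦
    (((hasDerivAt_sin x).const_mul π).sub
      ((hasDerivAt_id x).mul (((hasDerivAt_cos x).const_mul (π - 2)).const_add 2))).congr_deriv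
      (by simp only [id]; ring)
  have hD₁ : ∀ x, HasDerivAt (fun s ↦ 2 * cos s - 2 + (π - 2) * (s * sin s))
      ((π - 4) * sin x + (π - 2) * (x * cos x)) x := fun x ↦
    ((((hasDerivAt_cos x).const_mul 2).sub_const 2).add
      (((hasDerivAt_id x).mul (hasDerivAt_sin x)).const_mul (π - 2))).congr_deriv
      (by simp only [id]; ring)
  have hD₂ : ∀ x, HasDerivAt (fun s ↦ (π - 4) * sin s + (π - 2) * (s * cos s))
      ((2 * π - 6) * cos x - (π - 2) * (x * sin x)) x := fun x ↦
    ((((hasDerivAt_sin x).const_mul (π - 4))).add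
      (((hasDerivAt_id x).mul (hasDerivAt_cos x)).const_mul (π - 2))).congr_deriv
      (by simp only [id]; ring)
  have hD₃ : ∀ x, HasDerivAt (fun s ↦ (2 * π - 6) * cos s - (π - 2) * (s * sin s))
      (-((3 * π - 8) * sin x) - (π - 2) * (x * cos x)) x := fun x ↦
    ((((hasDerivAt_cos x).const_mul (2 * π - 6))).sub
      (((hasDerivAt_id x).mul (hasDerivAt_sin x)).const_mul (π - 2))).congr_deriv
      (by simp only [id]; ring)
  have hD₄ : ∀ x ∈ Ioo 0 (π / 2), -((3 * π - 8) * sin x) - (π - 2) * (x * cos x) < 0 :=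
    fun x hx ↦ by
      have := sin_pos_of_pos_of_lt_pi hx.1 (by linarith [hx.2])
      have := mul_nonneg hx.1.le (cos_nonneg_of_mem_Icc ⟨by linarith [hx.1], hx.2.le⟩)
      nlinarith
  have h₃ := (strictAntiOn_Icc_of_hasDerivAt_neg (fun x _ ↦ hD₃ x) hD₄).posThenNeg (by positivity)
    (fun x _ ↦ (hD₃ x).continuousAt.continuousWithinAt)
    (by simp only [cos_zero, sin_zero]; linarith)
    (by simp only [cos_pi_div_two, sin_pi_div_two]; nlinarith)
  have h₂ := posThenNeg_of_hasDerivAt (fun x _ ↦ hD₂ x) h₃ (by simp)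
    (by simp only [cos_pi_div_two, sin_pi_div_two]; linarith)
  -- `D' (π / 2) < 0` amounts to `π ^ 2 < 2 π + 4`.
  have h₁ := posThenNeg_of_hasDerivAt (fun x _ ↦ hD₁ x) h₂ (by simp)
    (by simp only [cos_pi_div_two, sin_pi_div_two]; nlinarith)
  have := h₁.pos_of_hasDerivAt (fun x _ ↦ hD x) (by simp) (by simp) s ⟨hs₀, hs⟩
  linarith

theorem StrictMonoOn.lt_of_tendsto_of_le {f g : ℝ → ℝ} {a b l : ℝ}
    (hf : StrictMonoOn f (Ioc a b)) (hg : Tendsto g (𝓝[>] a) (𝓝 l))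
    (hgf : ∀ x ∈ Ioc a b, g x ≤ f x) : ∀ x ∈ Ioc a b, l < f x := by
  intro x hx
  have hm : (a + x) / 2 ∈ Ioc a b := ⟨by linarith [hx.1], by linarith [hx.1, hx.2]⟩
  have hl : l ≤ f ((a + x) / 2) := by
    refine le_of_tendsto hg ?_
    filter_upwards [Ioo_mem_nhdsGT hm.1] with y hy
    have hyb : y ∈ Ioc a b := ⟨hy.1, hy.2.le.trans hm.2⟩
    exact (hgf y hyb).trans (hf.monotoneOn hyb hm hy.2.le)
  exact hl.trans_lt (hf hm hx (by linarith [hx.1]))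

theorem abs_cos_lt_one_of_mem_Ioo {θ : ℝ} (hθ : θ ∈ Ioo 0 π) : |cos θ| < 1 :=
  (sq_lt_one_iff_abs_lt_one _).1 <| by
    nlinarith [sin_sq_add_cos_sq θ, sin_pos_of_pos_of_lt_pi hθ.1 hθ.2]

noncomputable def carlsonLog (θ : ℝ) : ℝ :=
  log θ + (2 / π - 1 / 2) * log (1 + cos θ) - log (1 - cos θ) / 2

theorem hasDerivAt_carlsonLog {θ : ℝ} (hθ : θ ∈ Ioo 0 π) :
    HasDerivAt carlsonLog (θ⁻¹ - (2 + (π - 2) * cos θ) / (π * sin θ)) θ := by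
  obtain ⟨hcos₂, hcos₁⟩ := abs_lt.1 (abs_cos_lt_one_of_mem_Ioo hθ)
  have hsin : sin θ ≠ 0 := (sin_pos_of_pos_of_lt_pi hθ.1 hθ.2).ne'
  have h := ((hasDerivAt_log hθ.1.ne').add
    ((((hasDerivAt_cos θ).const_add 1).log (by linarith)).const_mul (2 / π - 1 / 2))).sub
    ((((hasDerivAt_cos θ).const_sub 1).log (by linarith)).div_const 2)
  refine h.congr_deriv ?_
  have := sin_sq_add_cos_sq θ
  have h₀ : θ ≠ 0 := hθ.1.ne'
  have h₁ : 1 - cos θ ≠ 0 := by linarith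
  have h₂ : 1 + cos θ ≠ 0 := by linarith
  field_simp
  linear_combination (-θ * (4 + (2 * π - 4) * cos θ)) * this

theorem strictMonoOn_carlsonLog : StrictMonoOn carlsonLog (Ioc 0 (π / 2)) := by
  have hderiv : ∀ θ ∈ Ioc 0 (π / 2), HasDerivAt carlsonLog _ θ := fun θ hθ ↦
    hasDerivAt_carlsonLog ⟨hθ.1, by linarith [hθ.2, pi_pos]⟩
  refine strictMonoOn_of_deriv_pos (convex_Ioc 0 (π / 2))
    (fun θ hθ ↦ (hderiv θ hθ).continuousAt.continuousWithinAt) fun θ hθ ↦ ?_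
  rw [interior_Ioc] at hθ
  rw [(hderiv θ (Ioo_subset_Ioc_self hθ)).deriv, sub_pos,
    div_lt_iff₀ (mul_pos pi_pos (sin_pos_of_pos_of_lt_pi hθ.1 (by linarith [hθ.2, pi_pos]))),
    inv_mul_eq_div, lt_div_iff₀ hθ.1, mul_comm]
  exact mul_two_add_mul_cos_lt_pi_mul_sin hθ.1 hθ.2

theorem carlsonLog_pi_div_two : carlsonLog (π / 2) = log (π / 2) := by
  simp [carlsonLog]

theorem add_log_two_mul_le_carlsonLog {θ : ℝ} (hθ : θ ∈ Ioo 0 π) :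
    log 2 / 2 + (2 / π - 1 / 2) * log (1 + cos θ) ≤ carlsonLog θ := by
  have hcos : 0 < 1 - cos θ := by linarith [(abs_lt.1 (abs_cos_lt_one_of_mem_Ioo hθ)).2]
  have : log (1 - cos θ) ≤ log (θ ^ 2 / 2) :=
    log_le_log hcos (by linarith [one_sub_sq_div_two_le_cos (x := θ)])
  rw [log_div (by positivity [hθ.1]) two_ne_zero, log_pow, Nat.cast_ofNat] at this
  unfold carlsonLog
  linarith

theorem two_div_pi_mul_log_two_lt_carlsonLog {θ : ℝ} (hθ : θ ∈ Ioc 0 (π / 2)) :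
    2 / π * log 2 < carlsonLog θ := by
  refine strictMonoOn_carlsonLog.lt_of_tendsto_of_le ?_ (fun t ht ↦ add_log_two_mul_le_carlsonLog
    ⟨ht.1, by linarith [ht.2, pi_pos]⟩) θ hθ
  have : ContinuousAt (fun t ↦ log 2 / 2 + (2 / π - 1 / 2) * log (1 + cos t)) 0 :=
    (((continuous_const.add continuous_cos).continuousAt.log (by norm_num)).const_mul _).const_add _
  convert this.tendsto.mono_left nhdsWithin_le_nhds using 2
  norm_num
  ring

theorem carlsonLog_lt_log_pi_div_two {θ : ℝ} (hθ : θ ∈ Ioo 0 (π / 2)) :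
    carlsonLog θ < log (π / 2) :=
  carlsonLog_pi_div_two ▸ strictMonoOn_carlsonLog (Ioo_subset_Ioc_self hθ)
    (right_mem_Ioc.2 (by positivity)) hθ.2

theorem two_rpow_add_div_rpow_le {y b c : ℝ} (d : ℝ) (hy₀ : 0 < y) (hy : y ≤ 2) (hbc : b ≤ c) :
    (2 : ℝ) ^ (b + d) / y ^ b ≤ 2 ^ (c + d) / y ^ c := by
  have key : ∀ e : ℝ, (2 : ℝ) ^ (e + d) / y ^ e = 2 ^ d * (2 / y) ^ e := fun e ↦ by
    rw [rpow_add two_pos, div_rpow zero_le_two hy₀.le]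
    ring
  rw [key, key]
  gcongr
  exact (one_le_div hy₀).2 hy

theorem two_rpow_mul_sqrt_div_lt_arccos {x : ℝ} (hx : x ∈ Ico 0 1) :
    (2 : ℝ) ^ (2 / π - 1 / 2 + 1 / 2) * (1 - x) ^ ((1 : ℝ) / 2) / (1 + x) ^ (2 / π - 1 / 2) <
      arccos x := by
  have h₁ : 0 < 1 - x := by linarith [hx.2]
  have h₂ : 0 < 1 + x := by linarith [hx.1]
  have hθ : arccos x ∈ Ioc 0 (π / 2) := ⟨arccos_pos.2 hx.2, arccos_le_pi_div_two.2 hx.1⟩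
  have key := two_div_pi_mul_log_two_lt_carlsonLog hθ
  rw [carlsonLog, cos_arccos (by linarith [hx.1]) hx.2.le] at key
  rw [← log_lt_log_iff (by positivity) hθ.1, log_div (by positivity) (by positivity),
    log_mul (by positivity) (by positivity), log_rpow two_pos, log_rpow h₁, log_rpow h₂]
  linarith

theorem arccos_lt_pi_div_two_mul_sqrt_div {x : ℝ} (hx : x ∈ Ioo 0 1) :
    arccos x < π / 2 * (1 - x) ^ ((1 : ℝ) / 2) / (1 + x) ^ (2 / π - 1 / 2) := by
  have h₁ : 0 < 1 - x := by linarith [hx.2]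
  have h₂ : 0 < 1 + x := by linarith [hx.1]
  have hθ : arccos x ∈ Ioo 0 (π / 2) := ⟨arccos_pos.2 hx.2, arccos_lt_pi_div_two.2 hx.1⟩
  have key := carlsonLog_lt_log_pi_div_two hθ
  rw [carlsonLog, cos_arccos (by linarith [hx.1]) hx.2.le] at key
  rw [← log_lt_log_iff hθ.1 (by positivity), log_div (by positivity) (by positivity),
    log_mul (by positivity) (by positivity), log_rpow h₁, log_rpow h₂]
  linarith

theorem carlson_arccos_reversed_double_ineq (b : ℝ) (hb : b ≤ 2 / Real.pi - 1 / 2) :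
    ∀ x ∈ Set.Ioo (0 : ℝ) 1,
      (2 : ℝ) ^ (b + 1 / 2) * (1 - x) ^ ((1 : ℝ) / 2) / (1 + x) ^ b < Real.arccos x ∧
      Real.arccos x < Real.pi / 2 * (1 - x) ^ ((1 : ℝ) / 2) / (1 + x) ^ b := by
  intro x hx
  have h₁ : 0 < 1 - x := by linarith [hx.2]
  have h₂ : 1 < 1 + x := by linarith [hx.1]
  constructor
  · calc (2 : ℝ) ^ (b + 1 / 2) * (1 - x) ^ ((1 : ℝ) / 2) / (1 + x) ^ b
        = (1 - x) ^ ((1 : ℝ) / 2) * (2 ^ (b + 1 / 2) / (1 + x) ^ b) := by ring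
      _ ≤ (1 - x) ^ ((1 : ℝ) / 2) * (2 ^ (2 / π - 1 / 2 + 1 / 2) / (1 + x) ^ (2 / π - 1 / 2)) :=
        mul_le_mul_of_nonneg_left
          (two_rpow_add_div_rpow_le _ (by linarith) (by linarith [hx.2]) hb) (rpow_nonneg h₁.le _)
      _ = 2 ^ (2 / π - 1 / 2 + 1 / 2) * (1 - x) ^ ((1 : ℝ) / 2) / (1 + x) ^ (2 / π - 1 / 2) := by
        ring
      _ < arccos x := two_rpow_mul_sqrt_div_lt_arccos (Ioo_subset_Ico_self hx)
  · calc arccos x < π / 2 * (1 - x) ^ ((1 : ℝ) / 2) / (1 + x) ^ (2 / π - 1 / 2) :=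
        arccos_lt_pi_div_two_mul_sqrt_div hx
      _ ≤ π / 2 * (1 - x) ^ ((1 : ℝ) / 2) / (1 + x) ^ b := by
        gcongr
        exact h₂.le
end

section
/- Let b be a real number. If the inequality arccos(x) < (π/2) · (1−x)^{1/2} / (1+x)^b holds for every x ∈ (0,1), then b ≤ 2/π − 1/2. (Together with the sufficiency, this inequality holds on (0,1) if and only if b ≤ 2/π − 1/2.) -/
/-!
Put `g x = arccos x * (1 + x) ^ b - π / 2 * √(1 - x)`, so the hypothesis says `g < 0` on `(0, 1)`.
Since `g 0 = 0` and `g' 0 = b π / 2 + π / 4 - 1`, the hypothesis forces `g' 0 ≤ 0`,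
which is exactly `b ≤ 2 / π - 1 / 2`.
-/

open Real Set Filter Topology

theorem HasDerivAt.eventually_nhdsGT_lt {f : ℝ → ℝ} {f' a : ℝ} (hf : HasDerivAt f f' a)
    (hf' : 0 < f') : ∀ᶠ x in 𝓝[>] a, f a < f x := by
  have hslope : ∀ᶠ x in 𝓝[>] a, 0 < slope f a x :=
    (hf.tendsto_slope.mono_left (nhdsGT_le_nhdsNE a)).eventually (eventually_gt_nhds hf')
  filter_upwards [hslope, self_mem_nhdsWithin] with x hx (hax : a < x)
  rw [slope_def_field, div_pos_iff_of_pos_right (sub_pos.mpr hax)] at hx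
  linarith

theorem hasDerivAt_carlson_gap (b : ℝ) :
    HasDerivAt (fun x => arccos x * (1 + x) ^ b - π / 2 * (1 - x) ^ ((1 : ℝ) / 2))
      (b * π / 2 + π / 4 - 1) 0 := by
  have harccos : HasDerivAt arccos (-1) 0 := by
    simpa using hasDerivAt_arccos (x := 0) (by norm_num) (by norm_num)
  have hpow_add : HasDerivAt (fun x : ℝ => (1 + x) ^ b) b 0 := by
    simpa using ((hasDerivAt_id (0 : ℝ)).const_add 1).rpow_const (p := b) (by norm_num)
  have hpow_sub : HasDerivAt (fun x : ℝ => (1 - x) ^ ((1 : ℝ) / 2)) (-(1 / 2)) 0 := by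
    simpa using ((hasDerivAt_id (0 : ℝ)).const_sub 1).rpow_const (p := (1 : ℝ) / 2)
      (by norm_num)
  refine ((harccos.mul hpow_add).sub (hpow_sub.const_mul (π / 2))).congr_deriv ?_
  norm_num [arccos_zero]
  ring

theorem carlson_arccos_reversed_lower_necessary (b : ℝ)
    (h : ∀ x ∈ Set.Ioo (0 : ℝ) 1,
      Real.arccos x < Real.pi / 2 * (1 - x) ^ ((1 : ℝ) / 2) / (1 + x) ^ b) :
    b ≤ 2 / Real.pi - 1 / 2 := by
  by_contra! hb
  have hderiv_pos : 0 < b * π / 2 + π / 4 - 1 := by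
    have : (2 / π - 1 / 2) * (π / 2) = 1 - π / 4 := by field_simp; ring
    nlinarith [mul_lt_mul_of_pos_right hb (by positivity : (0 : ℝ) < π / 2)]
  have hgap_pos := (hasDerivAt_carlson_gap b).eventually_nhdsGT_lt hderiv_pos
  have hlt_one : ∀ᶠ x in 𝓝[>] (0 : ℝ), x < 1 :=
    (eventually_lt_nhds one_pos).filter_mono nhdsWithin_le_nhds
  obtain ⟨x, ⟨hgap, hx1⟩, hx0⟩ := ((hgap_pos.and hlt_one).and self_mem_nhdsWithin).exists
  have hlt := h x ⟨hx0, hx1⟩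
  rw [lt_div_iff₀ (rpow_pos_of_pos (by linarith) b)] at hlt
  norm_num [arccos_zero] at hgap
  linarith
end

section
/- Let a, b be real numbers with 1/3 < a − b < 4/π² and 2/π − b < a ≤ 1/2. Suppose further that 16ab(b−a) + (a+b)² > 0 and that x₁ := ((a+b)(2b−2a+1) − √(16ab(b−a)+(a+b)²)) / (2(a−b)²) > 0. Then for every x ∈ (0,1), arccos(x) ≤ ((1+x₁)^{b+1/2} (1−x₁)^{1/2−a} / (a+b+(a−b)x₁)) · (1−x)^a / (1+x)^b. -/
/-!
Write `G(t) = (1+t)^(b+1/2) (1-t)^(1/2-a) / (a+b+(a-b)t)` (`Carlson.weight`) and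
`φ(t) = (1-t)^a / (1+t)^b`. Then `arccos' = G φ'`, and both `arccos` and `φ` vanish at `1`,
so `arccos ≤ C φ` on `(x, 1)` as soon as `G ≤ C` there. The log-derivative of `G` is
`Q(t) / ((1-t²)(a+b+(a-b)t))` for a quadratic `Q` with leading coefficient `(a-b)²` and
`Q(1) = 2a(2a-1) ≤ 0`, so `1` lies between the roots of `Q`; hence `G` increases up to the
smaller root `x₁` of `Q` and decreases afterwards on `(-1, 1)`, and `C = G(x₁)` works.
-/

open Real Set

section Quadratic

variable {A B C : ℝ}

theorem quadratic_eq_mul_sub_mul_sub (hA : A ≠ 0) {s : ℝ} (hs : discrim A B C = s * s)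
    (t : ℝ) :
    A * (t * t) + B * t + C = A * (t - (-B - s) / (2 * A)) * (t - (-B + s) / (2 * A)) := by
  rw [discrim] at hs
  field_simp
  linear_combination -hs

theorem discrim_eq_sq_sub_mul_quadratic (u : ℝ) :
    discrim A B C = (2 * A * u + B) ^ 2 - 4 * A * (A * (u * u) + B * u + C) := by
  rw [discrim]; ring

theorem discrim_nonneg_of_quadratic_nonpos (hA : 0 ≤ A) {u : ℝ}
    (hu : A * (u * u) + B * u + C ≤ 0) : 0 ≤ discrim A B C := by
  rw [discrim_eq_sq_sub_mul_quadratic u]; nlinarith [sq_nonneg (2 * A * u + B)]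

theorem le_larger_root_of_quadratic_nonpos (hA : 0 < A) {u : ℝ}
    (hu : A * (u * u) + B * u + C ≤ 0) : u ≤ (-B + √(discrim A B C)) / (2 * A) := by
  have hsq : 2 * A * u + B ≤ √(discrim A B C) := by
    apply Real.le_sqrt_of_sq_le
    rw [discrim_eq_sq_sub_mul_quadratic u]; nlinarith
  rw [le_div_iff₀ (by positivity)]; linarith

variable (hA : 0 < A) (hD : 0 ≤ discrim A B C) {t : ℝ}
include hA hD

theorem quadratic_nonneg_of_le_smaller_root (ht : t ≤ (-B - √(discrim A B C)) / (2 * A)) :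
    0 ≤ A * (t * t) + B * t + C := by
  have hr : (-B - √(discrim A B C)) / (2 * A) ≤ (-B + √(discrim A B C)) / (2 * A) := by
    gcongr; linarith [sqrt_nonneg (discrim A B C)]
  rw [quadratic_eq_mul_sub_mul_sub hA.ne' (mul_self_sqrt hD).symm]
  exact mul_nonneg_of_nonpos_of_nonpos (mul_nonpos_of_nonneg_of_nonpos hA.le (by linarith))
    (by linarith)

theorem quadratic_nonpos_of_mem_Icc_roots
    (ht : t ∈ Icc ((-B - √(discrim A B C)) / (2 * A)) ((-B + √(discrim A B C)) / (2 * A))) :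
    A * (t * t) + B * t + C ≤ 0 := by
  rw [quadratic_eq_mul_sub_mul_sub hA.ne' (mul_self_sqrt hD).symm]
  exact mul_nonpos_of_nonneg_of_nonpos (mul_nonneg hA.le (by linarith [ht.1]))
    (by linarith [ht.2])

end Quadratic

theorem isMaxOn_Ioo_of_hasDerivAt_nonneg_nonpos {f f' : ℝ → ℝ} {l u c : ℝ}
    (hc : c ∈ Ioo l u) (hf : ∀ x ∈ Ioo l u, HasDerivAt f (f' x) x)
    (hinc : ∀ x ∈ Ioo l u, x ≤ c → 0 ≤ f' x) (hdec : ∀ x ∈ Ioo l u, c ≤ x → f' x ≤ 0) :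
    IsMaxOn f (Ioo l u) c := by
  have hcont : ContinuousOn f (Ioo l u) := fun x hx => (hf x hx).continuousAt.continuousWithinAt
  have hmono : MonotoneOn f (Ioc l c) := by
    refine monotoneOn_of_hasDerivWithinAt_nonneg (f' := f') (convex_Ioc l c)
      (hcont.mono fun x hx => ⟨hx.1, hx.2.trans_lt hc.2⟩) (fun x hx => ?_) (fun x hx => ?_)
    all_goals rw [interior_Ioc] at hx
    · exact (hf x ⟨hx.1, hx.2.trans hc.2⟩).hasDerivWithinAt
    · exact hinc x ⟨hx.1, hx.2.trans hc.2⟩ hx.2.le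
  have hanti : AntitoneOn f (Ico c u) := by
    refine antitoneOn_of_hasDerivWithinAt_nonpos (f' := f') (convex_Ico c u)
      (hcont.mono fun x hx => ⟨hc.1.trans_le hx.1, hx.2⟩) (fun x hx => ?_) (fun x hx => ?_)
    all_goals rw [interior_Ico] at hx
    · exact (hf x ⟨hc.1.trans hx.1, hx.2⟩).hasDerivWithinAt
    · exact hdec x ⟨hc.1.trans hx.1, hx.2⟩ hx.1.le
  intro x hx
  rcases le_total x c with hxc | hcx
  · exact hmono ⟨hx.1, hxc⟩ ⟨hc.1, le_rfl⟩ hxc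
  · exact hanti ⟨le_rfl, hc.2⟩ ⟨hcx, hx.2⟩ hcx

namespace Carlson

variable {a b t : ℝ}

noncomputable def weight (a b t : ℝ) : ℝ :=
  (1 + t) ^ (b + 1 / 2) * (1 - t) ^ (1 / 2 - a) / (a + b + (a - b) * t)

noncomputable def logWeight (a b t : ℝ) : ℝ :=
  (b + 1 / 2) * log (1 + t) + (1 / 2 - a) * log (1 - t) - log (a + b + (a - b) * t)

def quadratic (a b t : ℝ) : ℝ :=
  (a - b) ^ 2 * (t * t) + -((a + b) * (2 * b - 2 * a + 1)) * t + ((a + b) ^ 2 - (a - b))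

theorem denom_pos (ha : 0 < a) (hb : 0 ≤ b) (ht : t ∈ Ioo (-1) 1) :
    0 < a + b + (a - b) * t := by
  nlinarith [ht.1, ht.2]

theorem exp_logWeight (ht : t ∈ Ioo (-1) 1) (hw : 0 < a + b + (a - b) * t) :
    exp (logWeight a b t) = weight a b t := by
  have h₁ : 0 < 1 + t := by linarith [ht.1]
  have h₂ : 0 < 1 - t := by linarith [ht.2]
  rw [logWeight, weight, exp_sub, exp_add, exp_log hw, rpow_def_of_pos h₁, rpow_def_of_pos h₂,
    mul_comm (b + 1 / 2), mul_comm (1 / 2 - a)]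

theorem hasDerivAt_logWeight (ht : t ∈ Ioo (-1) 1) (hw : a + b + (a - b) * t ≠ 0) :
    HasDerivAt (logWeight a b)
      (quadratic a b t / ((1 - t ^ 2) * (a + b + (a - b) * t))) t := by
  have h₁ : 1 + t ≠ 0 := by linarith [ht.1]
  have h₂ : 1 - t ≠ 0 := by linarith [ht.2]
  have hd := ((((hasDerivAt_id t).const_add 1).log h₁).const_mul (b + 1 / 2)).add
    ((((hasDerivAt_id t).const_sub 1).log h₂).const_mul (1 / 2 - a)) |>.sub
    ((((hasDerivAt_id t).const_mul (a - b)).const_add (a + b)).log hw)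
  refine hd.congr_deriv ?_
  rw [show 1 - t ^ 2 = (1 + t) * (1 - t) by ring, eq_div_iff (mul_ne_zero (mul_ne_zero h₁ h₂) hw),
    quadratic]
  simp only [id]
  -- otherwise `field_simp` reorders the denominator and no longer recognises it via `hw`
  set w := a + b + (a - b) * t with hw_def
  field_simp
  rw [hw_def]
  ring

theorem isMaxOn_weight (ha : 0 < a) (hb : 0 ≤ b) {c : ℝ} (hc : c ∈ Ioo (-1) 1)
    (hinc : ∀ t ∈ Ioo (-1) 1, t ≤ c → 0 ≤ quadratic a b t)
    (hdec : ∀ t ∈ Ioo (-1) 1, c ≤ t → quadratic a b t ≤ 0) :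
    IsMaxOn (weight a b) (Ioo (-1) 1) c := by
  have hden : ∀ t ∈ Ioo (-1 : ℝ) 1, 0 < (1 - t ^ 2) * (a + b + (a - b) * t) := fun t ht =>
    mul_pos (by nlinarith [ht.1, ht.2]) (denom_pos ha hb ht)
  have hlog : IsMaxOn (logWeight a b) (Ioo (-1) 1) c :=
    isMaxOn_Ioo_of_hasDerivAt_nonneg_nonpos hc
      (fun t ht => hasDerivAt_logWeight ht (denom_pos ha hb ht).ne')
      (fun t ht htc => div_nonneg (hinc t ht htc) (hden t ht).le)
      (fun t ht hct => div_nonpos_of_nonpos_of_nonneg (hdec t ht hct) (hden t ht).le)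
  rw [isMaxOn_iff] at hlog ⊢
  intro t ht
  rw [← exp_logWeight ht (denom_pos ha hb ht), ← exp_logWeight hc (denom_pos ha hb hc)]
  exact exp_le_exp.2 (hlog t ht)

noncomputable def root (a b : ℝ) : ℝ :=
  ((a + b) * (2 * b - 2 * a + 1) - √(16 * a * b * (b - a) + (a + b) ^ 2)) / (2 * (a - b) ^ 2)

theorem root_eq (a b : ℝ) :
    root a b = (-(-((a + b) * (2 * b - 2 * a + 1))) -
      √(discrim ((a - b) ^ 2) (-((a + b) * (2 * b - 2 * a + 1))) ((a + b) ^ 2 - (a - b)))) /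
        (2 * (a - b) ^ 2) := by
  rw [root, neg_neg, discrim]
  ring_nf

theorem root_lt_one (hb : 0 < b) (ha : a ≤ 1 / 2) (hab : 1 / 3 < a - b) : root a b < 1 := by
  rw [root, div_lt_one (by positivity)]
  nlinarith [sqrt_nonneg (16 * a * b * (b - a) + (a + b) ^ 2)]

theorem quadratic_one (a b : ℝ) : quadratic a b 1 = 2 * a * (2 * a - 1) := by
  rw [quadratic]; ring

theorem isMaxOn_weight_root (ha : 0 < a) (hb : 0 ≤ b) (ha' : a ≤ 1 / 2) (hab : a ≠ b)
    (hroot : root a b ∈ Ioo (-1) 1) : IsMaxOn (weight a b) (Ioo (-1) 1) (root a b) := by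
  have hA : 0 < (a - b) ^ 2 := by positivity
  have hQ1 : quadratic a b 1 ≤ 0 := by rw [quadratic_one]; nlinarith
  have hD := discrim_nonneg_of_quadratic_nonpos hA.le hQ1
  rw [root_eq] at hroot ⊢
  exact isMaxOn_weight ha hb hroot
    (fun t _ ht => quadratic_nonneg_of_le_smaller_root hA hD ht)
    (fun t ht ht' => quadratic_nonpos_of_mem_Icc_roots hA hD
      ⟨ht', ht.2.le.trans (le_larger_root_of_quadratic_nonpos hA hQ1)⟩)

theorem hasDerivAt_one_sub_rpow_div_one_add_rpow (a b : ℝ) (ht : t ∈ Ioo (-1) 1) :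
    HasDerivAt (fun y => (1 - y) ^ a / (1 + y) ^ b)
      (-((a + b + (a - b) * t) * ((1 - t) ^ (a - 1) * (1 + t) ^ (-b - 1)))) t := by
  have h₁ : 0 < 1 + t := by linarith [ht.1]
  have h₂ : 0 < 1 - t := by linarith [ht.2]
  have hd := (((hasDerivAt_id t).const_sub 1).rpow_const (p := a) (Or.inl h₂.ne')).div
    (((hasDerivAt_id t).const_add 1).rpow_const (p := b) (Or.inl h₁.ne'))
    (rpow_pos_of_pos h₁ b).ne'
  refine hd.congr_deriv ?_
  simp only [id]
  rw [rpow_sub_one h₂.ne', rpow_sub_one h₁.ne', sub_eq_add_neg (-b), rpow_add h₁, rpow_neg h₁.le,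
    rpow_neg_one]
  field_simp
  ring

theorem weight_mul_eq (ht : t ∈ Ioo (-1) 1) (hw : a + b + (a - b) * t ≠ 0) :
    weight a b t * ((a + b + (a - b) * t) * ((1 - t) ^ (a - 1) * (1 + t) ^ (-b - 1))) =
      1 / √(1 - t ^ 2) := by
  have h₁ : 0 < 1 + t := by linarith [ht.1]
  have h₂ : 0 < 1 - t := by linarith [ht.2]
  have hsplit :
      weight a b t * ((a + b + (a - b) * t) * ((1 - t) ^ (a - 1) * (1 + t) ^ (-b - 1))) =
        (1 - t) ^ (1 / 2 - a) * (1 - t) ^ (a - 1) * ((1 + t) ^ (b + 1 / 2) * (1 + t) ^ (-b - 1)) := by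
    rw [weight, ← mul_assoc, div_mul_cancel₀ _ hw]
    ring
  rw [hsplit, ← rpow_add h₂, ← rpow_add h₁, show 1 / 2 - a + (a - 1) = -(1 / 2) by ring,
    show b + 1 / 2 + (-b - 1) = -(1 / 2) by ring, ← mul_rpow h₂.le h₁.le, rpow_neg (by positivity),
    ← sqrt_eq_rpow, one_div]
  ring_nf

theorem hasDerivAt_mul_sub_arccos (C : ℝ) (ht : t ∈ Ioo (-1) 1)
    (hw : a + b + (a - b) * t ≠ 0) :
    HasDerivAt (fun y => C * ((1 - y) ^ a / (1 + y) ^ b) - arccos y)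
      ((weight a b t - C) *
        ((a + b + (a - b) * t) * ((1 - t) ^ (a - 1) * (1 + t) ^ (-b - 1)))) t := by
  refine (((hasDerivAt_one_sub_rpow_div_one_add_rpow a b ht).const_mul C).sub
    (hasDerivAt_arccos (by linarith [ht.1]) (by linarith [ht.2]))).congr_deriv ?_
  linear_combination -weight_mul_eq ht hw

theorem arccos_le_mul_of_weight_le (ha : 0 < a) (hb : 0 ≤ b) {C x : ℝ} (hx : x ∈ Ioo (-1) 1)
    (hC : ∀ t ∈ Ioo x 1, weight a b t ≤ C) :
    arccos x ≤ C * ((1 - x) ^ a / (1 + x) ^ b) := by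
  have hsub : interior (Icc x 1) ⊆ Ioo (-1) 1 := by
    rw [interior_Icc]; exact Ioo_subset_Ioo_left hx.1.le
  have hcont : ContinuousOn (fun y => C * ((1 - y) ^ a / (1 + y) ^ b) - arccos y) (Icc x 1) := by
    refine ContinuousOn.sub (continuousOn_const.mul (ContinuousOn.div ?_ ?_ ?_))
      continuous_arccos.continuousOn
    · exact (continuous_const.sub continuous_id).continuousOn.rpow_const fun _ _ => Or.inr ha.le
    · exact fun y hy => (ContinuousAt.rpow_const (by fun_prop)
        (Or.inl (by linarith [hx.1, hy.1] : 1 + y ≠ 0))).continuousWithinAt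
    · exact fun y hy => (rpow_pos_of_pos (by linarith [hx.1, hy.1]) b).ne'
  have hanti : AntitoneOn (fun y => C * ((1 - y) ^ a / (1 + y) ^ b) - arccos y) (Icc x 1) := by
    refine antitoneOn_of_hasDerivWithinAt_nonpos (convex_Icc x 1) hcont (fun t ht =>
      (hasDerivAt_mul_sub_arccos C (hsub ht) (denom_pos ha hb (hsub ht)).ne').hasDerivWithinAt)
      (fun t ht => ?_)
    have := denom_pos ha hb (hsub ht)
    have := rpow_pos_of_pos (by linarith [(hsub ht).2] : (0 : ℝ) < 1 - t) (a - 1)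
    have := rpow_pos_of_pos (by linarith [(hsub ht).1] : (0 : ℝ) < 1 + t) (-b - 1)
    rw [interior_Icc] at ht
    exact mul_nonpos_of_nonpos_of_nonneg (sub_nonpos.2 (hC t ht)) (by positivity)
  have := hanti (left_mem_Icc.2 hx.2.le) (right_mem_Icc.2 hx.2.le) hx.2.le
  simpa [zero_rpow ha.ne'] using this

end Carlson

open Carlson in
theorem carlson_arccos_upper_bound_extreme_general (a b : ℝ)
    (h1 : 1 / 3 < a - b)
    (h3 : 2 / Real.pi - b < a) (h4 : a ≤ 1 / 2)
    (h6 : ((a + b) * (2 * b - 2 * a + 1) -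
        Real.sqrt (16 * a * b * (b - a) + (a + b) ^ 2)) / (2 * (a - b) ^ 2) > 0) :
    ∀ x ∈ Set.Ioo (0 : ℝ) 1,
      Real.arccos x ≤
        ((1 + ((a + b) * (2 * b - 2 * a + 1) -
              Real.sqrt (16 * a * b * (b - a) + (a + b) ^ 2)) / (2 * (a - b) ^ 2)) ^ (b + 1 / 2) *
          (1 - ((a + b) * (2 * b - 2 * a + 1) -
              Real.sqrt (16 * a * b * (b - a) + (a + b) ^ 2)) / (2 * (a - b) ^ 2)) ^ (1 / 2 - a) /
          (a + b + (a - b) * (((a + b) * (2 * b - 2 * a + 1) -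
              Real.sqrt (16 * a * b * (b - a) + (a + b) ^ 2)) / (2 * (a - b) ^ 2)))) *
        ((1 - x) ^ a / (1 + x) ^ b) := by
  intro x hx
  have hb : 0 < b := by
    have : 1 / 2 < 2 / π := by rw [lt_div_iff₀ pi_pos]; linarith [pi_lt_four]
    linarith
  have ha : 0 < a := by linarith
  have hmax : IsMaxOn (weight a b) (Ioo (-1) 1) (root a b) :=
    isMaxOn_weight_root ha hb.le h4 (by linarith)
      ⟨neg_one_lt_zero.trans h6, root_lt_one hb h4 h1⟩
  exact arccos_le_mul_of_weight_le ha hb.le ⟨by linarith [hx.1], hx.2⟩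
    fun t ht => hmax ⟨by linarith [hx.1, ht.1], ht.2⟩

theorem carlson_arccos_upper_bound_extreme (a b : ℝ)
    (h1 : 1 / 3 < a - b) (h2 : a - b < 4 / Real.pi ^ 2)
    (h3 : 2 / Real.pi - b < a) (h4 : a ≤ 1 / 2)
    (h5 : 16 * a * b * (b - a) + (a + b) ^ 2 > 0)
    (h6 : ((a + b) * (2 * b - 2 * a + 1) -
        Real.sqrt (16 * a * b * (b - a) + (a + b) ^ 2)) / (2 * (a - b) ^ 2) > 0) :
    ∀ x ∈ Set.Ioo (0 : ℝ) 1,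
      Real.arccos x ≤
        ((1 + ((a + b) * (2 * b - 2 * a + 1) -
              Real.sqrt (16 * a * b * (b - a) + (a + b) ^ 2)) / (2 * (a - b) ^ 2)) ^ (b + 1 / 2) *
          (1 - ((a + b) * (2 * b - 2 * a + 1) -
              Real.sqrt (16 * a * b * (b - a) + (a + b) ^ 2)) / (2 * (a - b) ^ 2)) ^ (1 / 2 - a) /
          (a + b + (a - b) * (((a + b) * (2 * b - 2 * a + 1) -
              Real.sqrt (16 * a * b * (b - a) + (a + b) ^ 2)) / (2 * (a - b) ^ 2)))) *
        ((1 - x) ^ a / (1 + x) ^ b) :=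
  carlson_arccos_upper_bound_extreme_general a b h1 h3 h4 h6
end

section
/- The function F(x) = (2√2 + √(1+x)) / √(1−x) · arccos(x) is strictly decreasing on the interval (0,1). -/
open Real Set

/-!
With `t = arccos x / 2`, the half-angle formulas `√(1 + x) = √2 cos t` and `√(1 - x) = √2 sin t`
turn `F x` into `2 t (2 + cos t) / sin t`. The derivative of `t ↦ t (2 + cos t) / sin t` has
numerator `sin t (2 + cos t) - t (1 + 2 cos t)`, which vanishes at `0` and has derivative
`2 sin t (t - sin t) > 0`, so it is positive on `(0, π]`. Hence `F` is the composite of the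
decreasing `arccos` with an increasing function.
-/

theorem mul_one_add_two_mul_cos_lt_sin_mul_two_add_cos {t : ℝ} (ht₀ : 0 < t) (htπ : t ≤ π) :
    t * (1 + 2 * cos t) < sin t * (2 + cos t) := by
  let N : ℝ → ℝ := fun s ↦ sin s * (2 + cos s) - s * (1 + 2 * cos s)
  have hN : ∀ s, HasDerivAt N (2 * sin s * (s - sin s)) s := by
    intro s
    refine (((hasDerivAt_sin s).mul ((hasDerivAt_const s 2).add (hasDerivAt_cos s))).sub
      ((hasDerivAt_id s).mul ((hasDerivAt_const s 1).add
        ((hasDerivAt_cos s).const_mul 2)))).congr_deriv ?_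
    simp only [Pi.add_apply, id]
    linear_combination sin_sq_add_cos_sq s
  have hN_mono : StrictMonoOn N (Icc 0 π) := by
    refine strictMonoOn_of_deriv_pos (convex_Icc 0 π)
      (fun s _ ↦ (hN s).continuousAt.continuousWithinAt) fun s hs ↦ ?_
    rw [interior_Icc] at hs
    rw [(hN s).deriv]
    have := sin_pos_of_pos_of_lt_pi hs.1 hs.2
    have := sin_lt hs.1
    exact mul_pos (by positivity) (by linarith)
  have := hN_mono ⟨le_rfl, pi_pos.le⟩ ⟨ht₀.le, htπ⟩ ht₀
  simp only [N, sin_zero, cos_zero, zero_mul, sub_zero] at this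
  linarith

theorem strictMonoOn_mul_two_add_cos_div_sin :
    StrictMonoOn (fun t ↦ t * (2 + cos t) / sin t) (Ioo 0 π) := by
  have hderiv : ∀ t ∈ Ioo 0 π, HasDerivAt (fun t ↦ t * (2 + cos t) / sin t)
      ((sin t * (2 + cos t) - t * (1 + 2 * cos t)) / sin t ^ 2) t := by
    intro t ht
    refine (((hasDerivAt_id t).mul ((hasDerivAt_const t 2).add (hasDerivAt_cos t))).div
      (hasDerivAt_sin t) (sin_pos_of_pos_of_lt_pi ht.1 ht.2).ne').congr_deriv ?_
    simp only [Pi.add_apply, Pi.mul_apply, id]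
    congr 1
    linear_combination -t * sin_sq_add_cos_sq t
  refine strictMonoOn_of_deriv_pos (convex_Ioo 0 π)
    (fun t ht ↦ (hderiv t ht).continuousAt.continuousWithinAt) fun t ht ↦ ?_
  rw [interior_Ioo] at ht
  rw [(hderiv t ht).deriv]
  have := sin_pos_of_pos_of_lt_pi ht.1 ht.2
  have := mul_one_add_two_mul_cos_lt_sin_mul_two_add_cos ht.1 ht.2.le
  exact div_pos (by linarith) (by positivity)

theorem two_sqrt_two_add_sqrt_div_sqrt_mul_arccos {x : ℝ} (hx : x ∈ Icc (-1) 1) :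
    (2 * √2 + √(1 + x)) / √(1 - x) * arccos x
      = 2 * (arccos x / 2 * (2 + cos (arccos x / 2)) / sin (arccos x / 2)) := by
  set θ := arccos x
  have hθ₀ : 0 ≤ θ := arccos_nonneg x
  have hθπ : θ ≤ π := arccos_le_pi x
  have hcos : √(1 + x) = √2 * cos (θ / 2) := by
    rw [cos_half (by linarith [pi_pos]) hθπ, cos_arccos hx.1 hx.2, ← sqrt_mul zero_le_two]
    ring_nf
  have hsin : √(1 - x) = √2 * sin (θ / 2) := by
    rw [sin_half_eq_sqrt hθ₀ (by linarith [pi_pos]), cos_arccos hx.1 hx.2, ← sqrt_mul zero_le_two]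
    ring_nf
  have hsqrt2 : √2 ≠ 0 := by positivity
  rw [hcos, hsin, show 2 * √2 + √2 * cos (θ / 2) = √2 * (2 + cos (θ / 2)) by ring,
    mul_div_mul_left _ _ hsqrt2]
  ring

theorem carlson_arccos_F_strict_anti :
    StrictAntiOn
      (fun x : ℝ => (2 * Real.sqrt 2 + Real.sqrt (1 + x)) / Real.sqrt (1 - x) * Real.arccos x)
      (Set.Ioo 0 1) := by
  have hIcc : Ioo (0 : ℝ) 1 ⊆ Icc (-1) 1 :=
    Ioo_subset_Icc_self.trans (Icc_subset_Icc_left (by norm_num))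
  have half_mem : ∀ x ∈ Ioo (0 : ℝ) 1, arccos x / 2 ∈ Ioo 0 π := fun x hx ↦
    ⟨by linarith [arccos_pos.2 hx.2], by linarith [arccos_le_pi x, pi_pos]⟩
  intro x hx y hy hxy
  simp only [two_sqrt_two_add_sqrt_div_sqrt_mul_arccos (hIcc hx),
    two_sqrt_two_add_sqrt_div_sqrt_mul_arccos (hIcc hy)]
  have harccos : arccos y < arccos x := strictAntiOn_arccos (hIcc hx) (hIcc hy) hxy
  exact mul_lt_mul_of_pos_left
    (strictMonoOn_mul_two_add_cos_div_sin (half_mem y hy) (half_mem x hx) (by linarith)) two_pos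
end

section
/- For every x ∈ (0,1), the double inequality 6(1−x)^{1/2} / (2√2 + (1+x)^{1/2}) < arccos(x) < (1/2 + √2)·π·(1−x)^{1/2} / (2√2 + (1+x)^{1/2}) holds. -/
/-!
Substitute `x = cos (2t)` with `t ∈ (0, π/4)`, so that `√(1 - x) = √2 sin t` and
`√(1 + x) = √2 cos t`. The lower bound becomes the Cusa–Huygens inequality
`3 sin t < t (2 + cos t)`, and the upper bound becomes `2t (2 + cos t) < c sin t` with
`c = (1/2 + √2) π`. The difference `c sin t - 2t (2 + cos t)` is strictly concave on `[0, π]`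
because `c > 6`, and it vanishes at `0` and at `π/4`, so it is positive in between.
-/

open Real Set

lemma pos_of_hasDerivAt_of_deriv_pos {f f' : ℝ → ℝ} {a b t : ℝ}
    (hf : ∀ u, HasDerivAt f (f' u) u) (ha : f a = 0) (hf' : ∀ u ∈ Ioo a b, 0 < f' u)
    (ht : t ∈ Ioc a b) : 0 < f t := by
  have hmono : StrictMonoOn f (Icc a b) :=
    strictMonoOn_of_hasDerivWithinAt_pos (convex_Icc a b)
      (HasDerivAt.continuousOn fun u _ => hf u) (fun u _ => (hf u).hasDerivWithinAt)
      (by simpa only [interior_Icc] using hf')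
  simpa only [ha] using
    hmono (left_mem_Icc.2 (ht.1.le.trans ht.2)) (Ioc_subset_Icc_self ht) ht.1

lemma strictConcaveOn_of_hasDerivAt_of_hasDerivAt_neg {f f' f'' : ℝ → ℝ} {D : Set ℝ}
    (hD : Convex ℝ D) (hf : ∀ u, HasDerivAt f (f' u) u) (hf' : ∀ u, HasDerivAt f' (f'' u) u)
    (hf'' : ∀ u ∈ interior D, f'' u < 0) : StrictConcaveOn ℝ D f := by
  have hderiv : deriv f = f' := funext fun u => (hf u).deriv
  refine strictConcaveOn_of_deriv2_neg hD (HasDerivAt.continuousOn fun u _ => hf u) fun u hu => ?_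
  rw [Function.iterate_succ_apply, Function.iterate_one, hderiv, (hf' u).deriv]
  exact hf'' u hu

lemma mul_cos_lt_sin {t : ℝ} (ht : t ∈ Ioc 0 π) : t * cos t < sin t := by
  have hderiv : ∀ u, HasDerivAt (fun u => sin u - u * cos u) (u * sin u) u := fun u =>
    ((hasDerivAt_sin u).sub ((hasDerivAt_id' u).mul (hasDerivAt_cos u))).congr_deriv (by ring)
  have := pos_of_hasDerivAt_of_deriv_pos hderiv (by simp)
    (fun u hu => mul_pos hu.1 (sin_pos_of_pos_of_lt_pi hu.1 hu.2)) ht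
  linarith

lemma three_mul_sin_lt_mul_two_add_cos {t : ℝ} (ht : 0 < t) : 3 * sin t < t * (2 + cos t) := by
  rcases le_or_gt t π with htπ | hπt
  · have hderiv₂ : ∀ u, HasDerivAt (fun u => 2 - 2 * cos u - u * sin u)
        (sin u - u * cos u) u := fun u =>
      ((((hasDerivAt_cos u).const_mul 2).const_sub 2).sub
        ((hasDerivAt_id' u).mul (hasDerivAt_sin u))).congr_deriv (by ring)
    have hderiv₁ : ∀ u, HasDerivAt (fun u => u * (2 + cos u) - 3 * sin u)
        (2 - 2 * cos u - u * sin u) u := fun u =>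
      (((hasDerivAt_id' u).mul ((hasDerivAt_cos u).const_add 2)).sub
        ((hasDerivAt_sin u).const_mul 3)).congr_deriv (by ring)
    have hpos₂ : ∀ u ∈ Ioo 0 π, 0 < 2 - 2 * cos u - u * sin u := fun u hu => by
      simpa using pos_of_hasDerivAt_of_deriv_pos hderiv₂ (by simp)
        (fun v hv => sub_pos.2 (mul_cos_lt_sin (Ioo_subset_Ioc_self hv))) (Ioo_subset_Ioc_self hu)
    have := pos_of_hasDerivAt_of_deriv_pos hderiv₁ (by simp) hpos₂ ⟨ht, htπ⟩
    linarith
  · nlinarith [sin_le_one t, neg_one_le_cos t, pi_gt_three]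

lemma six_lt_half_add_sqrt_two_mul_pi : (6 : ℝ) < (1 / 2 + √2) * π := by
  have h2 : (1.414 : ℝ) < √2 := by
    rw [lt_sqrt (by norm_num)]; norm_num
  nlinarith [pi_gt_d2]

lemma two_mul_mul_two_add_cos_lt {t : ℝ} (ht : t ∈ Ioo 0 (π / 4)) :
    2 * t * (2 + cos t) < (1 / 2 + √2) * π * sin t := by
  set c := (1 / 2 + √2) * π with hc_def
  have hc : 6 < c := six_lt_half_add_sqrt_two_mul_pi
  have hderiv₁ : ∀ u, HasDerivAt (fun u => c * sin u - 2 * u * (2 + cos u))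
      (c * cos u - 2 * (2 + cos u) + 2 * u * sin u) u := fun u =>
    (((hasDerivAt_sin u).const_mul c).sub
      (((hasDerivAt_id' u).const_mul 2).mul ((hasDerivAt_cos u).const_add 2))).congr_deriv (by ring)
  have hderiv₂ : ∀ u, HasDerivAt (fun u => c * cos u - 2 * (2 + cos u) + 2 * u * sin u)
      ((4 - c) * sin u + 2 * u * cos u) u := fun u =>
    ((((hasDerivAt_cos u).const_mul c).sub (((hasDerivAt_cos u).const_add 2).const_mul 2)).add
      (((hasDerivAt_id' u).const_mul 2).mul (hasDerivAt_sin u))).congr_deriv (by ring)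
  have hconc : StrictConcaveOn ℝ (Icc 0 π) fun u => c * sin u - 2 * u * (2 + cos u) :=
    strictConcaveOn_of_hasDerivAt_of_hasDerivAt_neg (convex_Icc 0 π) hderiv₁ hderiv₂
      fun u hu => by
        rw [interior_Icc] at hu
        nlinarith [mul_cos_lt_sin (Ioo_subset_Ioc_self hu), sin_pos_of_pos_of_lt_pi hu.1 hu.2]
  have hquarter : c * sin (π / 4) - 2 * (π / 4) * (2 + cos (π / 4)) = 0 := by
    rw [sin_pi_div_four, cos_pi_div_four]
    linear_combination (√2 / 2) * hc_def + (π / 2) * mul_self_sqrt zero_le_two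
  have := hconc.lt_on_openSegment (y := π / 4) (z := t) (left_mem_Icc.2 pi_pos.le)
    ⟨by positivity, by linarith [pi_pos]⟩ (by positivity)
    (by rwa [openSegment_eq_Ioo (by positivity)])
  simp only [hquarter, sin_zero, mul_zero, zero_mul, sub_zero, min_self] at this
  linarith

lemma sqrt_one_add_cos_two_mul (t : ℝ) : √(1 + cos (2 * t)) = √2 * |cos t| := by
  rw [cos_two_mul, ← sqrt_sq_eq_abs, ← sqrt_mul zero_le_two]
  ring_nf

lemma sqrt_one_sub_cos_two_mul (t : ℝ) : √(1 - cos (2 * t)) = √2 * |sin t| := by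
  rw [cos_two_mul, ← sqrt_sq_eq_abs, ← sqrt_mul zero_le_two, ← sin_sq_add_cos_sq t]
  ring_nf

theorem carlson_arccos_sharp_double_ineq :
    ∀ x ∈ Set.Ioo (0 : ℝ) 1,
      6 * (1 - x) ^ ((1 : ℝ) / 2) / (2 * Real.sqrt 2 + (1 + x) ^ ((1 : ℝ) / 2)) <
        Real.arccos x ∧
      Real.arccos x <
        (1 / 2 + Real.sqrt 2) * Real.pi * (1 - x) ^ ((1 : ℝ) / 2) /
          (2 * Real.sqrt 2 + (1 + x) ^ ((1 : ℝ) / 2)) := by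
  rintro x ⟨hx₀, hx₁⟩
  obtain ⟨t, ht, rfl⟩ : ∃ t ∈ Ioo 0 (π / 4), cos (2 * t) = x :=
    ⟨arccos x / 2,
      ⟨half_pos (arccos_pos.2 hx₁), by linarith [arccos_lt_pi_div_two.2 hx₀]⟩,
      by rw [mul_div_cancel₀ _ two_ne_zero, cos_arccos (by linarith) hx₁.le]⟩
  have hsin : 0 < sin t := sin_pos_of_pos_of_lt_pi ht.1 (by linarith [ht.2, pi_pos])
  have hcos : 0 < cos t :=
    cos_pos_of_mem_Ioo ⟨by linarith [ht.1, pi_pos], by linarith [ht.2, pi_pos]⟩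
  have hs : 0 < √2 := by positivity
  have hden : 2 * √2 + √2 * cos t = √2 * (2 + cos t) := by ring
  rw [← sqrt_eq_rpow, ← sqrt_eq_rpow, sqrt_one_sub_cos_two_mul, sqrt_one_add_cos_two_mul,
    abs_of_pos hsin, abs_of_pos hcos, arccos_cos (by linarith [ht.1]) (by linarith [ht.2, pi_pos]),
    hden, div_lt_iff₀ (by positivity), lt_div_iff₀ (by positivity)]
  constructor
  · linarith [mul_lt_mul_of_pos_left (three_mul_sin_lt_mul_two_add_cos ht.1) hs]
  · linarith [mul_lt_mul_of_pos_left (two_mul_mul_two_add_cos_lt ht) hs]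
end

section
/- The constants 6 and (1/2 + √2)π in the double inequality 6(1−x)^{1/2}/(2√2 + (1+x)^{1/2}) < arccos(x) < (1/2+√2)π(1−x)^{1/2}/(2√2 + (1+x)^{1/2}) on (0,1) are best possible: if a real constant c satisfies c·(1−x)^{1/2}/(2√2 + (1+x)^{1/2}) < arccos(x) for all x ∈ (0,1), then c ≤ 6; and if a real constant C satisfies arccos(x) < C·(1−x)^{1/2}/(2√2 + (1+x)^{1/2}) for all x ∈ (0,1), then C ≥ (1/2 + √2)π. -/
open Real Set Filter Topology

/-!
With `w x = √(1 - x) / (2√2 + √(1 + x))`, an admissible lower constant is at most every limit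
of `arccos x / w x` at an end of `(0, 1)`, and an admissible upper constant at least every such
limit. At `0⁺` the ratio is continuous and tends to `(π / 2)(2√2 + 1) = (1/2 + √2)π`. At `1⁻`,
L'Hôpital gives `arccos x ~ √2 · √(1 - x)`, so the ratio tends to `√2 · 3√2 = 6`.
-/

lemma le_of_eventually_mul_lt_of_tendsto_div {α : Type*} {l : Filter α} [l.NeBot]
    {f g : α → ℝ} {c L : ℝ} (hg : ∀ᶠ x in l, 0 < g x) (hfg : ∀ᶠ x in l, c * g x < f x)
    (hlim : Tendsto (fun x => f x / g x) l (𝓝 L)) : c ≤ L :=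
  ge_of_tendsto hlim <| (hg.and hfg).mono fun _ h => ((lt_div_iff₀ h.1).2 h.2).le

lemma ge_of_eventually_lt_mul_of_tendsto_div {α : Type*} {l : Filter α} [l.NeBot]
    {f g : α → ℝ} {C L : ℝ} (hg : ∀ᶠ x in l, 0 < g x) (hfg : ∀ᶠ x in l, f x < C * g x)
    (hlim : Tendsto (fun x => f x / g x) l (𝓝 L)) : L ≤ C :=
  le_of_tendsto hlim <| (hg.and hfg).mono fun _ h => ((div_lt_iff₀ h.1).2 h.2).le

lemma tendsto_arccos_div_sqrt_one_sub :
    Tendsto (fun x => arccos x / √(1 - x)) (𝓝[<] 1) (𝓝 √2) := by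
  have hderiv : ∀ x ∈ Ioo (0 : ℝ) 1, HasDerivAt (fun y => √(1 - y)) (-1 / (2 * √(1 - x))) x :=
    fun x hx => ((hasDerivAt_id x).const_sub 1).sqrt (sub_ne_zero.2 hx.2.ne')
  refine HasDerivAt.lhopital_zero_left_on_Ioc zero_lt_one
    (fun x hx => hasDerivAt_arccos (by linarith [hx.1]) hx.2.ne) hderiv
    continuous_arccos.continuousOn (by fun_prop)
    (fun x hx => div_ne_zero (by norm_num) (by have := sqrt_pos.2 (sub_pos.2 hx.2); positivity))
    arccos_one (by simp) ?_
  have hquot : EqOn (fun x => 2 / √(1 + x))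
      (fun x => -(1 / √(1 - x ^ 2)) / (-1 / (2 * √(1 - x)))) (Ioo 0 1) := by
    intro x hx
    dsimp only
    have h₁ : 0 < √(1 - x) := sqrt_pos.2 (sub_pos.2 hx.2)
    have h₂ : 0 < √(1 + x) := sqrt_pos.2 (by linarith [hx.1])
    have hfac : √(1 - x ^ 2) = √(1 - x) * √(1 + x) := by
      rw [← sqrt_mul (sub_pos.2 hx.2).le]; ring_nf
    rw [hfac]
    field_simp
  have hsqrt : Tendsto (fun x : ℝ => √(1 + x)) (𝓝[<] 1) (𝓝 √2) := by
    have : Tendsto (fun x : ℝ => √(1 + x)) (𝓝 1) (𝓝 √(1 + 1)) :=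
      (Continuous.tendsto (by fun_prop) 1)
    rw [one_add_one_eq_two] at this
    exact this.mono_left nhdsWithin_le_nhds
  have hlim := (tendsto_const_nhds (x := (2 : ℝ))).div hsqrt (by positivity)
  rw [div_sqrt] at hlim
  exact hlim.congr' (eventuallyEq_of_mem (Ioo_mem_nhdsLT zero_lt_one) hquot)

noncomputable def carlsonWeight (x : ℝ) : ℝ := √(1 - x) / (2 * √2 + √(1 + x))

lemma carlsonWeight_pos {x : ℝ} (hx : x < 1) : 0 < carlsonWeight x := by
  have := sqrt_pos.2 (sub_pos.2 hx)
  unfold carlsonWeight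
  positivity

lemma tendsto_arccos_div_carlsonWeight_nhdsLT_one :
    Tendsto (fun x => arccos x / carlsonWeight x) (𝓝[<] 1) (𝓝 6) := by
  have hden : Tendsto (fun x : ℝ => 2 * √2 + √(1 + x)) (𝓝[<] 1) (𝓝 (2 * √2 + √(1 + 1))) :=
    (Continuous.tendsto (by fun_prop) 1).mono_left nhdsWithin_le_nhds
  have hsix : √2 * (2 * √2 + √(1 + 1)) = 6 := by
    rw [one_add_one_eq_two]
    linear_combination 3 * sq_sqrt (zero_le_two : (0 : ℝ) ≤ 2)
  rw [← hsix]
  refine (tendsto_arccos_div_sqrt_one_sub.mul hden).congr fun x => ?_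
  rw [carlsonWeight, div_div_eq_mul_div, mul_div_right_comm]

lemma tendsto_arccos_div_carlsonWeight_nhdsGT_zero :
    Tendsto (fun x => arccos x / carlsonWeight x) (𝓝[>] 0) (𝓝 ((1 / 2 + √2) * π)) := by
  have hcont : ContinuousAt (fun x => arccos x / carlsonWeight x) 0 :=
    continuous_arccos.continuousAt.div (by unfold carlsonWeight; fun_prop (disch := positivity))
      (carlsonWeight_pos zero_lt_one).ne'
  have hval : arccos 0 / carlsonWeight 0 = (1 / 2 + √2) * π := by
    have : 0 < 2 * √2 + 1 := by positivity
    simp only [carlsonWeight, arccos_zero, sub_zero, add_zero, sqrt_one]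
    field_simp
    ring
  exact hval ▸ hcont.tendsto.mono_left nhdsWithin_le_nhds

theorem carlson_arccos_best_constants :
    (∀ c : ℝ,
      (∀ x ∈ Set.Ioo (0 : ℝ) 1,
        c * (1 - x) ^ ((1 : ℝ) / 2) / (2 * Real.sqrt 2 + (1 + x) ^ ((1 : ℝ) / 2)) <
          Real.arccos x) → c ≤ 6) ∧
    (∀ C : ℝ,
      (∀ x ∈ Set.Ioo (0 : ℝ) 1,
        Real.arccos x <
          C * (1 - x) ^ ((1 : ℝ) / 2) / (2 * Real.sqrt 2 + (1 + x) ^ ((1 : ℝ) / 2))) →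
        C ≥ (1 / 2 + Real.sqrt 2) * Real.pi) := by
  have hweight (x : ℝ) :
      (1 - x) ^ ((1 : ℝ) / 2) / (2 * √2 + (1 + x) ^ ((1 : ℝ) / 2)) = carlsonWeight x := by
    simp only [carlsonWeight, sqrt_eq_rpow]
  constructor
  · intro c hc
    refine le_of_eventually_mul_lt_of_tendsto_div ?_ ?_ tendsto_arccos_div_carlsonWeight_nhdsLT_one
    · exact eventually_nhdsWithin_of_forall fun x hx => carlsonWeight_pos hx
    · filter_upwards [Ioo_mem_nhdsLT zero_lt_one] with x hx
      simpa only [mul_div_assoc, hweight] using hc x hx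
  · intro C hC
    refine ge_of_eventually_lt_mul_of_tendsto_div ?_ ?_
      tendsto_arccos_div_carlsonWeight_nhdsGT_zero
    · filter_upwards [Ioo_mem_nhdsGT zero_lt_one] with x hx
      exact carlsonWeight_pos hx.2
    · filter_upwards [Ioo_mem_nhdsGT zero_lt_one] with x hx
      simpa only [mul_div_assoc, hweight] using hC x hx
end

section
/- For every x ∈ (0,1), the double inequality π·(1−x)^{1/2} / (2·(1+x)^{1/6}) < arccos(x) < 4^{1/3}·(1−x)^{1/2} / (1+x)^{1/6} holds. -/
/-!
Write `x = cos 2s` with `0 < s < π/4`. Then `(1 - x)^(1/2) = √2 sin s` and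
`(1 + x)^(1/6) = 2^(1/6) cos^(1/3) s`, so both bounds are statements about
`φ s = sinc s / cos^(1/3) s`: the upper one is `φ 0 = 1 < φ s`, the lower one is
`φ s < φ (π/4) = 4 / (π 2^(1/3))`. The function `φ` increases on `[0, π/2)`, since the
derivative of `log φ` has the sign of `s (3 cos² s + sin² s) - 3 sin s cos s`, which is positive
by Cusa's inequality `3 sin u < u (2 + cos u)` at `u = 2s`.
-/

open Real Set

lemma mul_cos_lt_sin_s15 {x : ℝ} (h0 : 0 < x) (hx : x < π / 2) : x * cos x < sin x := by
  have hcos : 0 < cos x := cos_pos_of_mem_Ioo ⟨by linarith, hx⟩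
  have h := lt_tan h0 hx
  rwa [tan_eq_sin_div_cos, lt_div_iff₀ hcos] at h

lemma three_mul_sin_lt_mul_two_add_cos_s15 {u : ℝ} (h0 : 0 < u) (hu : u < π) :
    3 * sin u < u * (2 + cos u) := by
  let G : ℝ → ℝ := fun v ↦ v * (2 + cos v) - 3 * sin v
  have hG (v : ℝ) : HasDerivAt G (2 - 2 * cos v - v * sin v) v := by
    exact (((hasDerivAt_id' v).mul ((hasDerivAt_cos v).const_add 2)).sub
      ((hasDerivAt_sin v).const_mul 3)).congr_deriv (by ring)
  have hmono : StrictMonoOn G (Icc 0 π) := by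
    refine strictMonoOn_of_deriv_pos (convex_Icc 0 π) (by fun_prop) fun v hv ↦ ?_
    rw [interior_Icc] at hv
    rw [(hG v).deriv]
    -- with `v = 2 w`, the derivative is `4 sin w (sin w - w cos w)`
    obtain ⟨w, rfl⟩ : ∃ w, v = 2 * w := ⟨v / 2, by ring⟩
    have hsin : 0 < sin w := sin_pos_of_pos_of_lt_pi (by linarith [hv.1]) (by linarith [hv.2])
    have hw := mul_cos_lt_sin_s15 (x := w) (by linarith [hv.1]) (by linarith [hv.2])
    rw [cos_two_mul, sin_two_mul]
    nlinarith [sin_sq_add_cos_sq w, mul_pos hsin (sub_pos.2 hw)]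
  have h := hmono (left_mem_Icc.2 pi_pos.le) ⟨h0.le, hu.le⟩ h0
  simp only [G, zero_mul, sin_zero, mul_zero, sub_zero] at h
  linarith

lemma sinc_pos {x : ℝ} (h0 : 0 ≤ x) (hx : x < π) : 0 < sinc x := by
  rcases h0.eq_or_lt with rfl | h0
  · simp
  · rw [sinc_of_ne_zero h0.ne']
    exact div_pos (sin_pos_of_pos_of_lt_pi h0 hx) h0

lemma hasDerivAt_log_sinc {x : ℝ} (h0 : 0 < x) (hx : x < π) :
    HasDerivAt (fun t ↦ log (sinc t)) (cos x / sin x - 1 / x) x := by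
  have hsin : 0 < sin x := sin_pos_of_pos_of_lt_pi h0 hx
  have h := ((hasDerivAt_sin x).div (hasDerivAt_id' x) h0.ne').log (div_pos hsin h0).ne'
  refine (h.congr_deriv ?_).congr_of_eventuallyEq ?_
  · simp only [Pi.div_apply]; field_simp
  · filter_upwards [lt_mem_nhds h0] with t ht
    rw [sinc_of_ne_zero ht.ne', Pi.div_apply]

lemma strictMonoOn_log_sinc_sub_log_cos_div_three :
    StrictMonoOn (fun x ↦ log (sinc x) - log (cos x) / 3) (Ico 0 (π / 2)) := by
  refine strictMonoOn_of_deriv_pos (convex_Ico 0 (π / 2)) ?_ fun x hx ↦ ?_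
  · refine ContinuousOn.sub (continuous_sinc.continuousOn.log fun x hx ↦ ?_)
      ((continuous_cos.continuousOn.log fun x hx ↦ ?_).div_const 3)
    · exact (sinc_pos hx.1 (by linarith [hx.2, pi_pos])).ne'
    · exact (cos_pos_of_mem_Ioo ⟨by linarith [hx.1, pi_pos], hx.2⟩).ne'
  rw [interior_Ico] at hx
  obtain ⟨h0, hx⟩ := hx
  have hsin : 0 < sin x := sin_pos_of_pos_of_lt_pi h0 (by linarith)
  have hcos : 0 < cos x := cos_pos_of_mem_Ioo ⟨by linarith, hx⟩
  rw [((hasDerivAt_log_sinc h0 (by linarith)).fun_sub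
    (((hasDerivAt_cos x).log hcos.ne').div_const 3)).deriv]
  have hcusa := three_mul_sin_lt_mul_two_add_cos_s15 (u := 2 * x) (by linarith) (by linarith)
  rw [sin_two_mul, cos_two_mul] at hcusa
  have key : 3 * sin x * cos x < x * (3 * cos x ^ 2 + sin x ^ 2) := by
    nlinarith [sin_sq_add_cos_sq x]
  have heq : cos x / sin x - 1 / x - -sin x / cos x / 3
      = (x * (3 * cos x ^ 2 + sin x ^ 2) - 3 * sin x * cos x) / (3 * x * sin x * cos x) := by
    field_simp; ring
  rw [heq]
  exact div_pos (by linarith) (by positivity)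

lemma strictMonoOn_sinc_div_cos_rpow :
    StrictMonoOn (fun x ↦ sinc x / cos x ^ (1 / 3 : ℝ)) (Ico 0 (π / 2)) := by
  refine (exp_strictMono.comp_strictMonoOn strictMonoOn_log_sinc_sub_log_cos_div_three).congr
    fun x hx ↦ ?_
  have hsinc := sinc_pos hx.1 (by linarith [hx.2, pi_pos])
  have hcos : 0 < cos x := cos_pos_of_mem_Ioo ⟨by linarith [hx.1, pi_pos], hx.2⟩
  simp only [Function.comp, exp_sub, exp_log hsinc, rpow_def_of_pos hcos]
  ring_nf

lemma sinc_div_cos_rpow_pi_div_four :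
    sinc (π / 4) / cos (π / 4) ^ (1 / 3 : ℝ) = 4 / (π * 2 ^ (1 / 3 : ℝ)) := by
  have hsqrt : √2 / 2 = (2 : ℝ) ^ (-(1 / 2) : ℝ) := by
    rw [rpow_neg zero_le_two, ← sqrt_eq_rpow, div_eq_iff two_ne_zero, inv_mul_eq_div,
      div_sqrt]
  have hcbrt : (2 : ℝ) ^ (-(1 / 2) : ℝ) = 2 ^ (-(1 / 6) : ℝ) / 2 ^ (1 / 3 : ℝ) := by
    rw [← rpow_sub two_pos]; norm_num
  rw [sinc_of_ne_zero (by positivity), sin_pi_div_four, cos_pi_div_four, hsqrt,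
    ← rpow_mul zero_le_two, hcbrt]
  field_simp
  norm_num

lemma one_sub_cos_two_mul_rpow_half {x : ℝ} (hx : 0 ≤ sin x) :
    (1 - cos (2 * x)) ^ (1 / 2 : ℝ) = √2 * sin x := by
  rw [cos_two_mul, cos_sq', show 1 - (2 * (1 - sin x ^ 2) - 1) = 2 * sin x ^ 2 by ring,
    ← sqrt_eq_rpow, sqrt_mul zero_le_two, sqrt_sq hx]

lemma one_add_cos_two_mul_rpow_sixth {x : ℝ} (hx : 0 ≤ cos x) :
    (1 + cos (2 * x)) ^ (1 / 6 : ℝ) = 2 ^ (1 / 6 : ℝ) * cos x ^ (1 / 3 : ℝ) := by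
  rw [cos_two_mul, show 1 + (2 * cos x ^ 2 - 1) = 2 * cos x ^ 2 by ring,
    mul_rpow zero_le_two (by positivity), ← rpow_natCast, ← rpow_mul hx]
  norm_num

lemma pi_mul_rpow_div_rpow_lt_two_mul {x : ℝ} (h0 : 0 < x) (hx : x < π / 4) :
    π * (1 - cos (2 * x)) ^ (1 / 2 : ℝ) / (2 * (1 + cos (2 * x)) ^ (1 / 6 : ℝ)) < 2 * x := by
  have hsin : 0 < sin x := sin_pos_of_pos_of_lt_pi h0 (by linarith [pi_pos])
  have hcos : 0 < cos x := cos_pos_of_mem_Ioo ⟨by linarith, by linarith⟩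
  have h : sinc x / cos x ^ (1 / 3 : ℝ) < sinc (π / 4) / cos (π / 4) ^ (1 / 3 : ℝ) :=
    strictMonoOn_sinc_div_cos_rpow ⟨h0.le, by linarith⟩ ⟨by positivity, by linarith⟩ hx
  rw [sinc_div_cos_rpow_pi_div_four, sinc_of_ne_zero h0.ne', div_div,
    div_lt_div_iff₀ (by positivity) (by positivity)] at h
  have hsqrt : √2 = (2 : ℝ) ^ (1 / 6 : ℝ) * 2 ^ (1 / 3 : ℝ) := by
    rw [sqrt_eq_rpow, ← rpow_add two_pos]; norm_num
  rw [one_sub_cos_two_mul_rpow_half hsin.le, one_add_cos_two_mul_rpow_sixth hcos.le, hsqrt,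
    div_lt_iff₀ (by positivity)]
  linarith [mul_lt_mul_of_pos_left h (by positivity : (0 : ℝ) < 2 ^ (1 / 6 : ℝ))]

lemma two_mul_lt_cbrt_four_mul_rpow_div_rpow {x : ℝ} (h0 : 0 < x) (hx : x < π / 2) :
    2 * x < (4 : ℝ) ^ (1 / 3 : ℝ) * (1 - cos (2 * x)) ^ (1 / 2 : ℝ) /
      (1 + cos (2 * x)) ^ (1 / 6 : ℝ) := by
  have hsin : 0 < sin x := sin_pos_of_pos_of_lt_pi h0 (by linarith [pi_pos])
  have hcos : 0 < cos x := cos_pos_of_mem_Ioo ⟨by linarith, hx⟩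
  have h : sinc 0 / cos 0 ^ (1 / 3 : ℝ) < sinc x / cos x ^ (1 / 3 : ℝ) :=
    strictMonoOn_sinc_div_cos_rpow ⟨le_rfl, by positivity⟩ ⟨h0.le, hx⟩ h0
  rw [sinc_zero, cos_zero, one_rpow, div_one, sinc_of_ne_zero h0.ne', div_div,
    lt_div_iff₀ (by positivity)] at h
  have hconst : (4 : ℝ) ^ (1 / 3 : ℝ) * √2 = 2 * 2 ^ (1 / 6 : ℝ) := by
    rw [sqrt_eq_rpow, show (4 : ℝ) = 2 ^ (2 : ℝ) by norm_num, ← rpow_mul zero_le_two,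
      ← rpow_add two_pos, show (2 * (1 / 3) + 1 / 2 : ℝ) = 1 + 1 / 6 by norm_num,
      rpow_add two_pos, rpow_one]
  rw [one_sub_cos_two_mul_rpow_half hsin.le, one_add_cos_two_mul_rpow_sixth hcos.le, ← mul_assoc,
    hconst, lt_div_iff₀ (by positivity)]
  linarith [mul_lt_mul_of_pos_left h (by positivity : (0 : ℝ) < 2 * 2 ^ (1 / 6 : ℝ))]

theorem carlson_arccos_double_ineq_sixth :
    ∀ x ∈ Set.Ioo (0 : ℝ) 1,
      Real.pi * (1 - x) ^ ((1 : ℝ) / 2) / (2 * (1 + x) ^ ((1 : ℝ) / 6)) < Real.arccos x ∧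
      Real.arccos x < (4 : ℝ) ^ ((1 : ℝ) / 3) * (1 - x) ^ ((1 : ℝ) / 2) /
        (1 + x) ^ ((1 : ℝ) / 6) := by
  rintro x ⟨hx0, hx1⟩
  obtain ⟨s, hs⟩ : ∃ s, arccos x = 2 * s := ⟨arccos x / 2, by ring⟩
  have hx : x = cos (2 * s) := by rw [← hs, cos_arccos (by linarith) hx1.le]
  have h0 : 0 < s := by linarith [arccos_pos.2 hx1]
  have hpi4 : s < π / 4 := by linarith [arccos_lt_pi_div_two.2 hx0]
  rw [hs, hx]
  exact ⟨pi_mul_rpow_div_rpow_lt_two_mul h0 hpi4,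
    two_mul_lt_cbrt_four_mul_rpow_div_rpow h0 (by linarith)⟩
end

section
/- For every x ∈ [0,1), the inequality arccos(x) > 3x·√(1−x²) / (1 + 2x²) holds. -/
/-!
With `θ = arccos x > 0` we have `x = cos θ` and `√(1 - x²) = sin θ`, and the double-angle
formulas turn the claim into Cusa's inequality `3 sin t < t (2 + cos t)` at `t = 2θ`.
It is trivial for `t > π > 3`; for `t ≤ π` it holds because `t (2 + cos t) - 3 sin t` vanishes
at `0` and has derivative `2 - 2 cos t - t sin t = 4 sin (t/2) (sin (t/2) - (t/2) cos (t/2))`,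
positive by `tan u > u`.
-/

open Real Set

namespace Real

theorem mul_cos_lt_sin {x : ℝ} (hx₀ : 0 < x) (hx : x < π / 2) : x * cos x < sin x := by
  have hcos : 0 < cos x := cos_pos_of_mem_Ioo ⟨by linarith [pi_pos], hx⟩
  simpa [tan_eq_sin_div_cos, lt_div_iff₀ hcos] using lt_tan hx₀ hx

theorem two_sub_two_mul_cos_sub_mul_sin_pos {t : ℝ} (ht₀ : 0 < t) (ht : t < π) :
    0 < 2 - 2 * cos t - t * sin t := by
  obtain ⟨u, rfl⟩ : ∃ u, t = 2 * u := ⟨t / 2, by ring⟩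
  have hsin : 0 < sin u := sin_pos_of_pos_of_lt_pi (by linarith) (by linarith [pi_pos])
  have hgap : 0 < sin u - u * cos u := sub_pos.2 (mul_cos_lt_sin (by linarith) (by linarith))
  calc (0 : ℝ) < 4 * sin u * (sin u - u * cos u) := by positivity
    _ = 2 - 2 * cos (2 * u) - 2 * u * sin (2 * u) := by
      rw [cos_two_mul, sin_two_mul, cos_sq']
      ring

theorem strictMonoOn_mul_two_add_cos_sub_three_mul_sin :
    StrictMonoOn (fun t ↦ t * (2 + cos t) - 3 * sin t) (Icc 0 π) := by
  refine strictMonoOn_of_deriv_pos (convex_Icc 0 π) (by fun_prop) fun t ht ↦ ?_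
  rw [interior_Icc] at ht
  have hderiv : HasDerivAt (fun t ↦ t * (2 + cos t) - 3 * sin t)
      (2 - 2 * cos t - t * sin t) t :=
    (((hasDerivAt_id' t).mul ((hasDerivAt_cos t).const_add 2)).sub
      ((hasDerivAt_sin t).const_mul 3)).congr_deriv (by ring)
  rw [hderiv.deriv]
  exact two_sub_two_mul_cos_sub_mul_sin_pos ht.1 ht.2

theorem three_mul_sin_lt_mul_two_add_cos_s17 {t : ℝ} (ht : 0 < t) : 3 * sin t < t * (2 + cos t) := by
  rcases le_or_gt t π with htπ | htπ
  · have := strictMonoOn_mul_two_add_cos_sub_three_mul_sin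
      ⟨le_rfl, pi_pos.le⟩ ⟨ht.le, htπ⟩ ht
    simp only [zero_mul, sin_zero, mul_zero, sub_zero] at this
    linarith
  · nlinarith [sin_le_one t, neg_one_le_cos t, pi_gt_three]

end Real

theorem arccos_gt_three_x_sqrt :
    ∀ x ∈ Set.Ico (0 : ℝ) 1,
      Real.arccos x > 3 * x * Real.sqrt (1 - x ^ 2) / (1 + 2 * x ^ 2) := by
  rintro x ⟨hx₀, hx₁⟩
  have hθ : 0 < arccos x := arccos_pos.2 hx₁
  have hcusa := three_mul_sin_lt_mul_two_add_cos_s17 (mul_pos two_pos hθ)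
  rw [sin_two_mul, cos_two_mul, cos_arccos (by linarith) hx₁.le, sin_arccos] at hcusa
  rw [gt_iff_lt, div_lt_iff₀ (by positivity)]
  linarith
end
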